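/- arXiv:1712.06698 — 13 statements merged into one kernel-verified Lean document; each statement's English description precedes it below -/
import Mathlib

section
/- Let M, m > 0, set φ = arctan(√(m/M)), and define billiard velocities W = √M·V, w = √m·v. If (V', v') is the elastic ball-ball collision image of (V, v), then √M·V' = cos(2φ)·W + sin(2φ)·w and √m·v' = sin(2φ)·W − cos(2φ)·w; that is, in billiard coordinates the ball-ball collision acts as the orthogonal reflection of the velocity vector about the line through the origin at angle φ. In particular M·V'² + m·v'² = M·V² + m·v². -/
/-! With `t = tan φ = √(m/M)` the double-angle formulas give `cos 2φ = (M - m)/(M + m)` and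
`sin 2φ = 2√(Mm)/(M + m)`, which are exactly the coefficients of the collision law once the
velocities are rescaled by `√M` and `√m`. The matrix `[[cos 2φ, sin 2φ], [sin 2φ, -cos 2φ]]` is a
reflection, hence an isometry, and the isometry property in billiard coordinates is conservation
of kinetic energy. -/

open Real

namespace Real

theorem cos_two_mul_arctan (x : ℝ) : cos (2 * arctan x) = (1 - x ^ 2) / (1 + x ^ 2) := by
  rw [cos_two_mul, cos_sq_arctan]
  field_simp
  ring

theorem sin_two_mul_arctan (x : ℝ) : sin (2 * arctan x) = 2 * x / (1 + x ^ 2) := by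
  have hcos : cos (arctan x) ≠ 0 := (cos_arctan_pos x).ne'
  have hsin : sin (arctan x) = x * cos (arctan x) := by
    rw [← div_eq_iff hcos, ← tan_eq_sin_div_cos, tan_arctan]
  rw [sin_two_mul, hsin, mul_assoc, mul_assoc, ← sq, cos_sq_arctan]
  ring

end Real

section BilliardCoordinates

variable {M m : ℝ}

theorem cos_two_mul_arctan_sqrt_div (hM : 0 < M) (hm : 0 ≤ m) :
    cos (2 * arctan √(m / M)) = (M - m) / (M + m) := by
  rw [cos_two_mul_arctan, sq_sqrt (div_nonneg hm hM.le)]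
  field_simp

theorem sin_two_mul_arctan_sqrt_div (hM : 0 < M) (hm : 0 ≤ m) :
    sin (2 * arctan √(m / M)) = 2 * √M * √m / (M + m) := by
  have hsM : √M ≠ 0 := (sqrt_pos.mpr hM).ne'
  rw [sin_two_mul_arctan, sq_sqrt (div_nonneg hm hM.le), sqrt_div' _ hM.le]
  field_simp
  rw [sq_sqrt hM.le]

theorem sqrt_mul_collision_fst (hm : 0 ≤ m) (V v : ℝ) :
    √M * (((M - m) * V + 2 * m * v) / (M + m)) =
      (M - m) / (M + m) * (√M * V) + 2 * √M * √m / (M + m) * (√m * v) := by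
  linear_combination (-2 * √M * v / (M + m)) * mul_self_sqrt hm

theorem sqrt_mul_collision_snd (hM : 0 ≤ M) (V v : ℝ) :
    √m * ((2 * M * V + (m - M) * v) / (M + m)) =
      2 * √M * √m / (M + m) * (√M * V) - (M - m) / (M + m) * (√m * v) := by
  linear_combination (-2 * √m * V / (M + m)) * mul_self_sqrt hM

end BilliardCoordinates

theorem reflection_sq_add_sq {c s : ℝ} (h : s ^ 2 + c ^ 2 = 1) (W w : ℝ) :
    (c * W + s * w) ^ 2 + (s * W - c * w) ^ 2 = W ^ 2 + w ^ 2 := by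
  linear_combination (W ^ 2 + w ^ 2) * h

theorem mul_sq_eq_sq_sqrt_mul {M : ℝ} (hM : 0 ≤ M) (x : ℝ) : M * x ^ 2 = (√M * x) ^ 2 := by
  rw [mul_pow, sq_sqrt hM]

/-- In billiard (Sinai) coordinates `W = √M·V`, `w = √m·v`, the elastic
ball-ball collision acts as the orthogonal reflection of the velocity vector
about the line through the origin at angle `φ = arctan √(m/M)`; in particular
the kinetic energy is conserved. -/
theorem galperin_ball_ball_reflection_in_billiard_coordinates
    (M m V v φ W w V' v' : ℝ) (hM : 0 < M) (hm : 0 < m)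
    (hφ : φ = Real.arctan (Real.sqrt (m / M)))
    (hW : W = Real.sqrt M * V) (hw : w = Real.sqrt m * v)
    (hV' : V' = ((M - m) * V + 2 * m * v) / (M + m))
    (hv' : v' = (2 * M * V + (m - M) * v) / (M + m)) :
    Real.sqrt M * V' = Real.cos (2 * φ) * W + Real.sin (2 * φ) * w ∧
    Real.sqrt m * v' = Real.sin (2 * φ) * W - Real.cos (2 * φ) * w ∧
    M * V' ^ 2 + m * v' ^ 2 = M * V ^ 2 + m * v ^ 2 := by
  have hcos : cos (2 * φ) = (M - m) / (M + m) := hφ ▸ cos_two_mul_arctan_sqrt_div hM hm.le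
  have hsin : sin (2 * φ) = 2 * √M * √m / (M + m) := hφ ▸ sin_two_mul_arctan_sqrt_div hM hm.le
  have hV'W : √M * V' = cos (2 * φ) * W + sin (2 * φ) * w := by
    rw [hcos, hsin, hV', hW, hw]
    exact sqrt_mul_collision_fst hm.le V v
  have hv'w : √m * v' = sin (2 * φ) * W - cos (2 * φ) * w := by
    rw [hcos, hsin, hv', hW, hw]
    exact sqrt_mul_collision_snd hM.le V v
  refine ⟨hV'W, hv'w, ?_⟩
  calc M * V' ^ 2 + m * v' ^ 2 = (√M * V') ^ 2 + (√m * v') ^ 2 := by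
        rw [mul_sq_eq_sq_sqrt_mul hM.le, mul_sq_eq_sq_sqrt_mul hm.le]
    _ = W ^ 2 + w ^ 2 := by
        rw [hV'W, hv'w]
        exact reflection_sq_add_sq (sin_sq_add_cos_sq _) W w
    _ = M * V ^ 2 + m * v ^ 2 := by
        rw [hW, hw, mul_sq_eq_sq_sqrt_mul hM.le, mul_sq_eq_sq_sqrt_mul hm.le]
end

section
/- For all integers k ≥ 0 the velocity sequences of the Galperin billiard satisfy the closed forms V_{2k} = V_0·cos(2kθ), v_{2k} = −√(M/m)·V_0·sin(2kθ), V_{2k+1} = V_0·cos(2(k+1)θ), and v_{2k+1} = √(M/m)·V_0·sin(2(k+1)θ), where θ = arctan(√(m/M)). -/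
/-- Closed forms for the velocity sequences of the Galperin billiard:
`V_{2k} = V_0 cos(2kθ)`, `v_{2k} = -√(M/m) V_0 sin(2kθ)`,
`V_{2k+1} = V_0 cos(2(k+1)θ)`, `v_{2k+1} = √(M/m) V_0 sin(2(k+1)θ)`,
where `θ = arctan √(m/M)`. -/
theorem galperin_velocity_closed_forms
    (M m : ℝ) (hM : 0 < M) (hm : 0 < m)
    (V v : ℕ → ℝ) (hV0 : 0 < V 0) (hv0 : v 0 = 0)
    (hBB : ∀ k : ℕ,
      V (2 * k + 1) = ((M - m) * V (2 * k) + 2 * m * v (2 * k)) / (M + m) ∧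
      v (2 * k + 1) = (2 * M * V (2 * k) + (m - M) * v (2 * k)) / (M + m))
    (hBW : ∀ k : ℕ, 1 ≤ k →
      V (2 * k) = V (2 * k - 1) ∧ v (2 * k) = -v (2 * k - 1))
    (θ : ℝ) (hθ : θ = Real.arctan (Real.sqrt (m / M))) :
    ∀ k : ℕ,
      V (2 * k) = V 0 * Real.cos (2 * (k : ℝ) * θ) ∧
      v (2 * k) = -Real.sqrt (M / m) * V 0 * Real.sin (2 * (k : ℝ) * θ) ∧
      V (2 * k + 1) = V 0 * Real.cos (2 * ((k : ℝ) + 1) * θ) ∧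
      v (2 * k + 1) = Real.sqrt (M / m) * V 0 * Real.sin (2 * ((k : ℝ) + 1) * θ) := by
  have hMm : (M + m) ≠ 0 := by positivity
  set x := Real.sqrt (m / M) with hxdef
  set S := Real.sqrt (M / m) with hSdef
  have hSx : S * x = 1 := by
    rw [hSdef, hxdef, ← Real.sqrt_mul (by positivity) (m / M),
      show M / m * (m / M) = 1 by field_simp]
    exact Real.sqrt_one
  have hmS : m * S = M * x := by
    rw [hSdef, hxdef,
      show m * Real.sqrt (M / m) = Real.sqrt (m ^ 2 * (M / m)) by
        rw [Real.sqrt_mul (by positivity), Real.sqrt_sq hm.le],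
      show M * Real.sqrt (m / M) = Real.sqrt (M ^ 2 * (m / M)) by
        rw [Real.sqrt_mul (by positivity), Real.sqrt_sq hM.le]]
    congr 1
    field_simp
  have hx2 : x ^ 2 = m / M := Real.sq_sqrt (by positivity)
  have hr2 : Real.sqrt (1 + x ^ 2) ^ 2 = 1 + x ^ 2 := Real.sq_sqrt (by positivity)
  have hr0 : Real.sqrt (1 + x ^ 2) ≠ 0 := by positivity
  have hcos : Real.cos θ = 1 / Real.sqrt (1 + x ^ 2) := by rw [hθ, Real.cos_arctan]
  have hsin : Real.sin θ = x / Real.sqrt (1 + x ^ 2) := by rw [hθ, Real.sin_arctan]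
  have hrr : Real.sqrt (1 + x ^ 2) ^ 2 = (M + m) / M := by
    rw [hr2, hx2]; field_simp
  have hc2 : Real.cos (2 * θ) = (M - m) / (M + m) := by
    rw [Real.cos_two_mul, hcos, div_pow, one_pow, hrr]
    field_simp
    ring
  have hs2 : Real.sin (2 * θ) = 2 * x * M / (M + m) := by
    rw [Real.sin_two_mul, hsin, hcos,
      show 2 * (x / Real.sqrt (1 + x ^ 2)) * (1 / Real.sqrt (1 + x ^ 2))
          = 2 * x / Real.sqrt (1 + x ^ 2) ^ 2 by ring,
      hrr]
    field_simp
  have step : ∀ k : ℕ,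
      V (2 * k) = V 0 * Real.cos (2 * (k : ℝ) * θ) →
      v (2 * k) = -S * V 0 * Real.sin (2 * (k : ℝ) * θ) →
      V (2 * k + 1) = V 0 * Real.cos (2 * ((k : ℝ) + 1) * θ) ∧
      v (2 * k + 1) = S * V 0 * Real.sin (2 * ((k : ℝ) + 1) * θ) := by
    intro k hVe hve
    obtain ⟨h1, h2⟩ := hBB k
    have hang : 2 * ((k : ℝ) + 1) * θ = 2 * (k : ℝ) * θ + 2 * θ := by ring
    constructor
    · rw [h1, hVe, hve, hang, Real.cos_add, hc2, hs2]
      linear_combination (-2 * V 0 * Real.sin (2 * (k : ℝ) * θ) / (M + m)) * hmS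
    · rw [h2, hVe, hve, hang, Real.sin_add, hc2, hs2]
      linear_combination (-2 * M * V 0 * Real.cos (2 * (k : ℝ) * θ) / (M + m)) * hSx
  have even : ∀ k : ℕ,
      V (2 * k) = V 0 * Real.cos (2 * (k : ℝ) * θ) ∧
      v (2 * k) = -S * V 0 * Real.sin (2 * (k : ℝ) * θ) := by
    intro k
    induction k with
    | zero => simp [hv0]
    | succ n ih =>
      obtain ⟨o1, o2⟩ := step n ih.1 ih.2
      obtain ⟨w1, w2⟩ := hBW (n + 1) (by omega)
      rw [show 2 * (n + 1) - 1 = 2 * n + 1 by omega] at w1 w2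
      constructor
      · rw [w1, o1]; push_cast; ring_nf
      · rw [w2, o2]; push_cast; ring_nf
  intro k
  obtain ⟨e1, e2⟩ := even k
  obtain ⟨o1, o2⟩ := step k e1 e2
  exact ⟨e1, e2, o1, o2⟩
end

section
/- For all integers k ≥ 0 the relative velocities in the Galperin billiard satisfy V_{2k} − v_{2k} = V_0·sin((2k+1)θ)/sin θ and v_{2k+1} − V_{2k+1} = V_0·sin((2k+1)θ)/sin θ, where θ = arctan(√(m/M)); in particular each ball-ball collision exactly reverses the relative velocity of the two balls. -/
/-!
With `tan θ = √(m/M)`, i.e. `M sin² θ = m cos² θ`, a ball-ball collision and the following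
ball-wall collision are, in the mass-weighted coordinates `(√M V, √m v)`, two reflections whose
composition is the rotation by `2θ`. So the even-indexed states are `(A cos φ, -A cot θ sin φ)`
with `A = V₀`, `φ = 2kθ`, and their relative velocity is `A sin (φ + θ) / sin θ`.
-/

open Real

theorem elastic_collision_sub_eq {K : Type*} [Field K] {M m : K} (hMm : M + m ≠ 0) (V v : K) :
    (2 * M * V + (m - M) * v) / (M + m) - ((M - m) * V + 2 * m * v) / (M + m) = V - v := by
  field_simp
  ring

theorem mul_sin_sq_arctan_sqrt_div {M m : ℝ} (hM : 0 < M) (hm : 0 ≤ m) :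
    M * sin (arctan √(m / M)) ^ 2 = m * cos (arctan √(m / M)) ^ 2 := by
  rw [sin_sq_arctan, cos_sq_arctan, sq_sqrt (by positivity)]
  field_simp

section CollisionThenWall

variable {M m θ : ℝ}

theorem collision_then_wall_rotate (hMm : M + m ≠ 0) (hs : sin θ ≠ 0)
    (hθ : M * sin θ ^ 2 = m * cos θ ^ 2) (A φ : ℝ) :
    ((M - m) * (A * cos φ) + 2 * m * -(A * cos θ * sin φ / sin θ)) / (M + m)
        = A * cos (φ + 2 * θ) ∧
      -((2 * M * (A * cos φ) + (m - M) * -(A * cos θ * sin φ / sin θ)) / (M + m))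
        = -(A * cos θ * sin (φ + 2 * θ) / sin θ) := by
  have hsin : (M + m) * sin θ ^ 2 = m := by
    linear_combination hθ + m * sin_sq_add_cos_sq θ
  have hcos : (M + m) * cos θ ^ 2 = M := by
    linear_combination M * sin_sq_add_cos_sq θ - hθ
  rw [cos_add, sin_add, sin_two_mul, cos_two_mul]
  constructor
  · field_simp
    linear_combination 2 * A * (sin φ * cos θ * hsin - cos φ * sin θ * hcos)
  · field_simp
    linear_combination (2 * A * (cos θ * sin φ + sin θ * cos φ)) * hcos

theorem collision_then_wall_closed_form (hMm : M + m ≠ 0) (hs : sin θ ≠ 0)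
    (hθ : M * sin θ ^ 2 = m * cos θ ^ 2) {V v : ℕ → ℝ} (hv0 : v 0 = 0)
    (hstep : ∀ k : ℕ,
      V (2 * (k + 1)) = ((M - m) * V (2 * k) + 2 * m * v (2 * k)) / (M + m) ∧
      v (2 * (k + 1)) = -((2 * M * V (2 * k) + (m - M) * v (2 * k)) / (M + m)))
    (k : ℕ) :
    V (2 * k) = V 0 * cos (2 * k * θ) ∧ v (2 * k) = -(V 0 * cos θ * sin (2 * k * θ) / sin θ) := by
  induction k with
  | zero => simp [hv0]
  | succ k ih =>
    obtain ⟨hV, hv⟩ := ih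
    have hangle : 2 * ((k + 1 : ℕ) : ℝ) * θ = 2 * k * θ + 2 * θ := by push_cast; ring
    rw [hangle, (hstep k).1, (hstep k).2, hV, hv]
    exact collision_then_wall_rotate hMm hs hθ _ _

end CollisionThenWall

theorem galperin_relative_velocity_closed_forms_general
    (M m : ℝ) (hM : 0 < M) (hm : 0 < m)
    (V v : ℕ → ℝ) (hv0 : v 0 = 0)
    (hBB : ∀ k : ℕ,
      V (2 * k + 1) = ((M - m) * V (2 * k) + 2 * m * v (2 * k)) / (M + m) ∧
      v (2 * k + 1) = (2 * M * V (2 * k) + (m - M) * v (2 * k)) / (M + m))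
    (hBW : ∀ k : ℕ, 1 ≤ k →
      V (2 * k) = V (2 * k - 1) ∧ v (2 * k) = -v (2 * k - 1))
    (θ : ℝ) (hθ : θ = Real.arctan (Real.sqrt (m / M))) :
    ∀ k : ℕ,
      V (2 * k) - v (2 * k)
        = V 0 * Real.sin ((2 * (k : ℝ) + 1) * θ) / Real.sin θ ∧
      v (2 * k + 1) - V (2 * k + 1)
        = V 0 * Real.sin ((2 * (k : ℝ) + 1) * θ) / Real.sin θ := by
  have hMm : M + m ≠ 0 := by positivity
  have hs : sin θ ≠ 0 := (hθ ▸ sin_arctan_pos.mpr (by positivity)).ne'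
  have htan : M * sin θ ^ 2 = m * cos θ ^ 2 := hθ ▸ mul_sin_sq_arctan_sqrt_div hM hm.le
  have hstep (k : ℕ) :
      V (2 * (k + 1)) = ((M - m) * V (2 * k) + 2 * m * v (2 * k)) / (M + m) ∧
      v (2 * (k + 1)) = -((2 * M * V (2 * k) + (m - M) * v (2 * k)) / (M + m)) := by
    obtain ⟨hV, hv⟩ := hBW (k + 1) (by omega)
    rw [show 2 * (k + 1) - 1 = 2 * k + 1 by omega, (hBB k).1] at hV
    rw [show 2 * (k + 1) - 1 = 2 * k + 1 by omega, (hBB k).2] at hv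
    exact ⟨hV, hv⟩
  intro k
  have hrel : V (2 * k) - v (2 * k) = V 0 * sin ((2 * k + 1) * θ) / sin θ := by
    obtain ⟨hV, hv⟩ := collision_then_wall_closed_form hMm hs htan hv0 hstep k
    rw [hV, hv, add_mul, one_mul, sin_add]
    field_simp
    ring
  refine ⟨hrel, ?_⟩
  rw [(hBB k).1, (hBB k).2, elastic_collision_sub_eq hMm, hrel]

/-- Relative velocities in the Galperin billiard:
`V_{2k} − v_{2k} = V_0 sin((2k+1)θ)/sin θ` and
`v_{2k+1} − V_{2k+1} = V_0 sin((2k+1)θ)/sin θ`, where `θ = arctan √(m/M)`;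
each ball-ball collision exactly reverses the relative velocity. -/
theorem galperin_relative_velocity_closed_forms
    (M m : ℝ) (hM : 0 < M) (hm : 0 < m)
    (V v : ℕ → ℝ) (hV0 : 0 < V 0) (hv0 : v 0 = 0)
    (hBB : ∀ k : ℕ,
      V (2 * k + 1) = ((M - m) * V (2 * k) + 2 * m * v (2 * k)) / (M + m) ∧
      v (2 * k + 1) = (2 * M * V (2 * k) + (m - M) * v (2 * k)) / (M + m))
    (hBW : ∀ k : ℕ, 1 ≤ k →
      V (2 * k) = V (2 * k - 1) ∧ v (2 * k) = -v (2 * k - 1))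
    (θ : ℝ) (hθ : θ = Real.arctan (Real.sqrt (m / M))) :
    ∀ k : ℕ,
      V (2 * k) - v (2 * k)
        = V 0 * Real.sin ((2 * (k : ℝ) + 1) * θ) / Real.sin θ ∧
      v (2 * k + 1) - V (2 * k + 1)
        = V 0 * Real.sin ((2 * (k : ℝ) + 1) * θ) / Real.sin θ :=
  galperin_relative_velocity_closed_forms_general M m hM hm V v hv0 hBB hBW θ hθ
end

section
/- Fix an integer n ≥ 1 and assume sin(jθ) ≠ 0 for all integers 1 ≤ j ≤ n (so that the Galperin billiard position recursion is well defined up to index n). Then the positions satisfy the closed forms: for every k ≥ 1 with 2k ≤ n, X_{2k} = x_0·tan θ / sin(2kθ) and x_{2k} = 0; and for every k ≥ 0 with 2k+1 ≤ n, X_{2k+1} = x_{2k+1} = x_0·sin θ / sin((2k+1)θ), where θ = arctan(√(m/M)). -/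
/-!
Measure the small ball's velocity in the rescaled unit `tan θ · v`, so that kinetic energy is
proportional to `V² + (tan θ · v)²`. In these coordinates a ball–ball collision is the reflection
`(V, w) ↦ (cos 2θ · V + sin 2θ · w, sin 2θ · V - cos 2θ · w)` and a wall collision flips `w`, so
after `k` rounds the velocity pair is `V₀ (cos 2kθ, -sin 2kθ)`. With these velocities each
collision multiplies the collision point by a ratio of sines, `sin φ cos θ / sin (φ + θ)` at a
ball–ball collision and `sin (φ - θ) / (sin φ cos θ)` at the wall, and the products telescope:
`X_j sin (jθ)` equals `x₀ sin θ` for odd `j` and `x₀ tan θ` for even `j ≥ 2`.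
-/

open Real

namespace GalperinBilliard

section Collision

variable {M m θ φ V₀ V v X x₀ : ℝ}

theorem ball_collision_velocity (hM : 0 < M) (hθ : tan θ ^ 2 = m / M) (hc : cos θ ≠ 0)
    (hV : V = V₀ * cos φ) (hv : tan θ * v = -(V₀ * sin φ)) :
    ((M - m) * V + 2 * m * v) / (M + m) = V₀ * cos (φ + 2 * θ) ∧
      tan θ * ((2 * M * V + (m - M) * v) / (M + m)) = V₀ * sin (φ + 2 * θ) := by
  have hm : m = M * tan θ ^ 2 := by rw [hθ]; field_simp
  have hMm : M + m = M / cos θ ^ 2 := by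
    rw [eq_div_iff (pow_ne_zero 2 hc), hm, tan_eq_sin_div_cos]
    field_simp
    linear_combination sin_sq_add_cos_sq θ
  have hfst : (M - m) * V + 2 * m * v =
      M * (1 - tan θ ^ 2) * V + 2 * M * tan θ * (tan θ * v) := by
    rw [hm]; ring
  have hsnd : tan θ * (2 * M * V + (m - M) * v) =
      2 * M * tan θ * V - M * (1 - tan θ ^ 2) * (tan θ * v) := by
    rw [hm]; ring
  rw [hMm, ← mul_div_assoc, hfst, hsnd, hv, hV, cos_add, sin_add, cos_two_mul, sin_two_mul,
    tan_eq_sin_div_cos]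
  constructor
  · field_simp
    linear_combination (-V₀ * cos φ) * sin_sq_add_cos_sq θ
  · field_simp
    linear_combination (-V₀ * sin φ) * sin_sq_add_cos_sq θ

theorem wall_collision_position (hc : cos θ ≠ 0) (hV₀ : V₀ ≠ 0) (hφ : sin φ ≠ 0)
    (hV : V = V₀ * cos φ) (hv : tan θ * v = V₀ * sin φ) (hX : X * sin (φ - θ) = x₀ * sin θ) :
    (X - V / v * X) * sin φ = x₀ * tan θ := by
  have hv0 : v ≠ 0 := by rintro rfl; simp_all
  have hVv : V / v = cos φ * sin θ / (sin φ * cos θ) := by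
    rw [tan_eq_sin_div_cos] at hv
    rw [div_eq_div_iff hv0 (mul_ne_zero hφ hc), hV]
    field_simp at hv
    linear_combination (-cos φ) * hv
  calc (X - V / v * X) * sin φ = X * sin (φ - θ) / cos θ := by
        rw [hVv, sin_sub]; field_simp
    _ = x₀ * tan θ := by rw [hX, tan_eq_sin_div_cos]; ring

theorem ball_collision_position (hc : cos θ ≠ 0) (hV₀ : V₀ ≠ 0) (hφθ : sin (φ + θ) ≠ 0)
    (hV : V = V₀ * cos φ) (hv : tan θ * v = -(V₀ * sin φ)) (hX : X * sin φ = x₀ * tan θ) :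
    (X + X * V / (v - V)) * sin (φ + θ) = x₀ * sin θ := by
  have hvV : tan θ * (v - V) = -(V₀ * sin (φ + θ) / cos θ) := by
    rw [mul_sub, hv, hV, sin_add, tan_eq_sin_div_cos]; field_simp; ring
  have hne : tan θ * (v - V) ≠ 0 := by rw [hvV]; simp [hc, hV₀, hφθ]
  calc (X + X * V / (v - V)) * sin (φ + θ)
        = X * (tan θ * v) / (tan θ * (v - V)) * sin (φ + θ) := by
        rw [mul_left_comm X, mul_div_mul_left _ _ (left_ne_zero_of_mul hne)]
        field_simp [right_ne_zero_of_mul hne]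
        ring
    _ = X * sin φ * cos θ := by rw [hv, hvV]; field_simp
    _ = x₀ * sin θ := by rw [hX, tan_eq_sin_div_cos]; field_simp

end Collision

section Orbit

variable {M m θ : ℝ} {n : ℕ} {V v X x : ℕ → ℝ}

theorem velocity_eq_cos_sin (hM : 0 < M) (hθ : tan θ ^ 2 = m / M) (hc : cos θ ≠ 0)
    (hv0 : v 0 = 0)
    (hBBvel : ∀ k : ℕ,
      V (2 * k + 1) = ((M - m) * V (2 * k) + 2 * m * v (2 * k)) / (M + m) ∧
      v (2 * k + 1) = (2 * M * V (2 * k) + (m - M) * v (2 * k)) / (M + m))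
    (hBWvel : ∀ k : ℕ, 1 ≤ k → V (2 * k) = V (2 * k - 1) ∧ v (2 * k) = -v (2 * k - 1))
    (k : ℕ) :
    (V (2 * k) = V 0 * cos (2 * k * θ) ∧ tan θ * v (2 * k) = -(V 0 * sin (2 * k * θ))) ∧
      (V (2 * k + 1) = V 0 * cos (2 * (k + 1) * θ) ∧
        tan θ * v (2 * k + 1) = V 0 * sin (2 * (k + 1) * θ)) := by
  have odd_of_even : ∀ k : ℕ, V (2 * k) = V 0 * cos (2 * k * θ) →
      tan θ * v (2 * k) = -(V 0 * sin (2 * k * θ)) →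
      V (2 * k + 1) = V 0 * cos (2 * (k + 1) * θ) ∧
        tan θ * v (2 * k + 1) = V 0 * sin (2 * (k + 1) * θ) := by
    intro k hV hv
    rw [(hBBvel k).1, (hBBvel k).2, show 2 * ((k : ℝ) + 1) * θ = 2 * k * θ + 2 * θ by ring]
    exact ball_collision_velocity hM hθ hc hV hv
  induction k with
  | zero =>
    have heven : V (2 * 0) = V 0 * cos (2 * ((0 : ℕ) : ℝ) * θ) ∧
        tan θ * v (2 * 0) = -(V 0 * sin (2 * ((0 : ℕ) : ℝ) * θ)) := by simp [hv0]
    exact ⟨heven, odd_of_even 0 heven.1 heven.2⟩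
  | succ k ih =>
    obtain ⟨hV, hv⟩ := hBWvel (k + 1) (by omega)
    rw [show 2 * (k + 1) - 1 = 2 * k + 1 by omega] at hV hv
    have heven : V (2 * (k + 1)) = V 0 * cos (2 * ((k + 1 : ℕ) : ℝ) * θ) ∧
        tan θ * v (2 * (k + 1)) = -(V 0 * sin (2 * ((k + 1 : ℕ) : ℝ) * θ)) := by
      rw [hV, hv, mul_neg, ih.2.1, ih.2.2]
      push_cast
      exact ⟨rfl, rfl⟩
    exact ⟨heven, odd_of_even (k + 1) heven.1 heven.2⟩

theorem position_mul_sin_eq (hc : cos θ ≠ 0) (hV0 : V 0 ≠ 0) (hv0 : v 0 = 0)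
    (hsin : ∀ j : ℕ, 1 ≤ j → j ≤ n → sin ((j : ℝ) * θ) ≠ 0)
    (hvel : ∀ k : ℕ,
      (V (2 * k) = V 0 * cos (2 * k * θ) ∧ tan θ * v (2 * k) = -(V 0 * sin (2 * k * θ))) ∧
      (V (2 * k + 1) = V 0 * cos (2 * (k + 1) * θ) ∧
        tan θ * v (2 * k + 1) = V 0 * sin (2 * (k + 1) * θ)))
    (hBBpos : ∀ k : ℕ, 2 * k + 1 ≤ n →
      X (2 * k + 1)
        = X (2 * k) + (X (2 * k) - x (2 * k)) * V (2 * k) / (v (2 * k) - V (2 * k)) ∧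
      x (2 * k + 1) = X (2 * k + 1))
    (hBWpos : ∀ k : ℕ, 1 ≤ k → 2 * k ≤ n →
      X (2 * k) = X (2 * k - 1) - (V (2 * k - 1) / v (2 * k - 1)) * x (2 * k - 1) ∧
      x (2 * k) = 0)
    (k : ℕ) :
    (2 * k + 1 ≤ n → X (2 * k + 1) * sin ((2 * k + 1) * θ) = x 0 * sin θ) ∧
      (2 * (k + 1) ≤ n → X (2 * (k + 1)) * sin (2 * (k + 1) * θ) = x 0 * tan θ) := by
  have even_of_odd : ∀ k : ℕ, 2 * (k + 1) ≤ n →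
      X (2 * k + 1) * sin ((2 * k + 1) * θ) = x 0 * sin θ →
      X (2 * (k + 1)) * sin (2 * (k + 1) * θ) = x 0 * tan θ := by
    intro k hk hX
    obtain ⟨hpos, -⟩ := hBWpos (k + 1) (by omega) hk
    rw [show 2 * (k + 1) - 1 = 2 * k + 1 by omega, (hBBpos k (by omega)).2] at hpos
    have hφ : sin (2 * ((k : ℝ) + 1) * θ) ≠ 0 := by
      exact_mod_cast hsin (2 * (k + 1)) (by omega) hk
    rw [hpos]
    refine wall_collision_position hc hV0 hφ (hvel k).2.1 (hvel k).2.2 ?_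
    rwa [show 2 * ((k : ℝ) + 1) * θ - θ = (2 * k + 1) * θ by ring]
  induction k with
  | zero =>
    refine ⟨fun h1 => ?_, fun h2 => even_of_odd 0 h2 ?_⟩ <;>
    · rw [(hBBpos 0 (by omega)).1, hv0, zero_sub, div_neg, mul_div_assoc, div_self hV0]
      simp
  | succ k ih =>
    have hodd : 2 * (k + 1) + 1 ≤ n →
        X (2 * (k + 1) + 1) * sin ((2 * ((k + 1 : ℕ) : ℝ) + 1) * θ) = x 0 * sin θ := by
      intro hk
      have hφθ : sin (2 * ((k + 1 : ℕ) : ℝ) * θ + θ) ≠ 0 := by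
        convert hsin (2 * (k + 1) + 1) (by omega) hk using 2
        push_cast; ring
      rw [(hBBpos (k + 1) hk).1, (hBWpos (k + 1) (by omega) (by omega)).2, sub_zero,
        show (2 * ((k + 1 : ℕ) : ℝ) + 1) * θ = 2 * ((k + 1 : ℕ) : ℝ) * θ + θ by ring]
      refine ball_collision_position hc hV0 hφθ (hvel (k + 1)).1.1 (hvel (k + 1)).1.2 ?_
      push_cast
      exact ih.2 (by omega)
    exact ⟨hodd, fun hk => even_of_odd (k + 1) hk (hodd (by omega))⟩

end Orbit

end GalperinBilliard

theorem galperin_position_closed_forms_general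
    (M m : ℝ) (hM : 0 < M) (hm : 0 < m)
    (θ : ℝ) (hθ : θ = Real.arctan (Real.sqrt (m / M)))
    (n : ℕ)
    (hsin : ∀ j : ℕ, 1 ≤ j → j ≤ n → Real.sin ((j : ℝ) * θ) ≠ 0)
    (V v X x : ℕ → ℝ)
    (hV0 : 0 < V 0) (hv0 : v 0 = 0)
    (hBBvel : ∀ k : ℕ,
      V (2 * k + 1) = ((M - m) * V (2 * k) + 2 * m * v (2 * k)) / (M + m) ∧
      v (2 * k + 1) = (2 * M * V (2 * k) + (m - M) * v (2 * k)) / (M + m))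
    (hBWvel : ∀ k : ℕ, 1 ≤ k →
      V (2 * k) = V (2 * k - 1) ∧ v (2 * k) = -v (2 * k - 1))
    (hBBpos : ∀ k : ℕ, 2 * k + 1 ≤ n →
      X (2 * k + 1)
        = X (2 * k) + (X (2 * k) - x (2 * k)) * V (2 * k) / (v (2 * k) - V (2 * k)) ∧
      x (2 * k + 1) = X (2 * k + 1))
    (hBWpos : ∀ k : ℕ, 1 ≤ k → 2 * k ≤ n →
      X (2 * k) = X (2 * k - 1) - (V (2 * k - 1) / v (2 * k - 1)) * x (2 * k - 1) ∧
      x (2 * k) = 0) :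
    (∀ k : ℕ, 1 ≤ k → 2 * k ≤ n →
      X (2 * k) = x 0 * Real.tan θ / Real.sin (2 * (k : ℝ) * θ) ∧
      x (2 * k) = 0) ∧
    (∀ k : ℕ, 2 * k + 1 ≤ n →
      X (2 * k + 1) = x 0 * Real.sin θ / Real.sin ((2 * (k : ℝ) + 1) * θ) ∧
      x (2 * k + 1) = X (2 * k + 1)) := by
  have hc : cos θ ≠ 0 := hθ ▸ (cos_arctan_pos _).ne'
  have htan : tan θ ^ 2 = m / M := by rw [hθ, tan_arctan, sq_sqrt (div_pos hm hM).le]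
  have hpos := GalperinBilliard.position_mul_sin_eq hc hV0.ne' hv0 hsin
    (GalperinBilliard.velocity_eq_cos_sin hM htan hc hv0 hBBvel hBWvel) hBBpos hBWpos
  refine ⟨fun k hk hkn => ⟨?_, (hBWpos k hk hkn).2⟩, fun k hkn => ⟨?_, (hBBpos k hkn).2⟩⟩
  · obtain ⟨j, rfl⟩ : ∃ j, k = j + 1 := ⟨k - 1, by omega⟩
    refine eq_div_of_mul_eq (by exact_mod_cast hsin (2 * (j + 1)) (by omega) hkn) ?_
    push_cast
    exact (hpos j).2 hkn
  · exact eq_div_of_mul_eq (by exact_mod_cast hsin (2 * k + 1) (by omega) hkn) ((hpos k).1 hkn)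

/-- Closed forms for the positions of the Galperin billiard: for `2k ≤ n`
(with `k ≥ 1`), `X_{2k} = x_0 tan θ / sin(2kθ)` and `x_{2k} = 0`; and for
`2k+1 ≤ n`, `X_{2k+1} = x_{2k+1} = x_0 sin θ / sin((2k+1)θ)`, where
`θ = arctan √(m/M)` and `sin(jθ) ≠ 0` for all `1 ≤ j ≤ n` (so the recursion is
well defined up to index `n`). -/
theorem galperin_position_closed_forms
    (M m : ℝ) (hM : 0 < M) (hm : 0 < m)
    (θ : ℝ) (hθ : θ = Real.arctan (Real.sqrt (m / M)))
    (n : ℕ) (hn : 1 ≤ n)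
    (hsin : ∀ j : ℕ, 1 ≤ j → j ≤ n → Real.sin ((j : ℝ) * θ) ≠ 0)
    (V v X x : ℕ → ℝ)
    (hV0 : 0 < V 0) (hv0 : v 0 = 0) (hX0x0 : X 0 < x 0) (hx0 : x 0 < 0)
    (hBBvel : ∀ k : ℕ,
      V (2 * k + 1) = ((M - m) * V (2 * k) + 2 * m * v (2 * k)) / (M + m) ∧
      v (2 * k + 1) = (2 * M * V (2 * k) + (m - M) * v (2 * k)) / (M + m))
    (hBWvel : ∀ k : ℕ, 1 ≤ k →
      V (2 * k) = V (2 * k - 1) ∧ v (2 * k) = -v (2 * k - 1))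
    (hBBpos : ∀ k : ℕ, 2 * k + 1 ≤ n →
      X (2 * k + 1)
        = X (2 * k) + (X (2 * k) - x (2 * k)) * V (2 * k) / (v (2 * k) - V (2 * k)) ∧
      x (2 * k + 1) = X (2 * k + 1))
    (hBWpos : ∀ k : ℕ, 1 ≤ k → 2 * k ≤ n →
      X (2 * k) = X (2 * k - 1) - (V (2 * k - 1) / v (2 * k - 1)) * x (2 * k - 1) ∧
      x (2 * k) = 0) :
    (∀ k : ℕ, 1 ≤ k → 2 * k ≤ n →
      X (2 * k) = x 0 * Real.tan θ / Real.sin (2 * (k : ℝ) * θ) ∧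
      x (2 * k) = 0) ∧
    (∀ k : ℕ, 2 * k + 1 ≤ n →
      X (2 * k + 1) = x 0 * Real.sin θ / Real.sin ((2 * (k : ℝ) + 1) * θ) ∧
      x (2 * k + 1) = X (2 * k + 1)) :=
  galperin_position_closed_forms_general M m hM hm θ hθ n hsin V v X x hV0 hv0 hBBvel hBWvel hBBpos
    hBWpos
end

section
/- Fix an integer n ≥ 1 and assume sin(jθ) ≠ 0 for all integers 1 ≤ j ≤ n+1. Define the inter-collision times of the Galperin billiard by τ_{2k} = (x_{2k} − X_{2k})/(V_{2k} − v_{2k}) (time from the ball-wall collision 2k to the next ball-ball collision) and τ_{2k+1} = −x_{2k+1}/v_{2k+1} (time from the ball-ball collision 2k+1 to the next ball-wall collision). Then for every integer 1 ≤ j ≤ n, τ_j = −x_0·sin θ·tan θ / (V_0·sin(jθ)·sin((j+1)θ)), where θ = arctan(√(m/M)). -/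
/-!
With `θ = arctan √(m/M)` the mass fractions are `M/(M+m) = cos²θ` and `m/(M+m) = sin²θ`, so in
the rescaled velocity plane `(V, v tan θ)` a ball-ball collision is the reflection
`(a, b) ↦ (a cos 2θ + b sin 2θ, a sin 2θ - b cos 2θ)` and a wall collision flips the sign of `b`.
A full cycle is therefore a rotation by `2θ`: `(V_{2k}, v_{2k} tan θ) = V₀ (cos 2kθ, -sin 2kθ)`.
Substituting these velocities into the position rules gives, by induction, the collision points
`x_{2k+1} = x₀ sin θ / sin((2k+1)θ)` and `X_{2k} = x₀ tan θ / sin(2kθ)`. Each inter-collision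
time is a distance over a relative speed, and the relative speeds are `V₀ sin((j+1)θ) / sin θ`
(even `j`) and `V₀ sin((j+1)θ) / tan θ` (odd `j`).
-/

namespace Galperin

open Real

theorem sq_cos_sin_arctan_sqrt_div {M m : ℝ} (hM : 0 < M) (hm : 0 ≤ m) :
    cos (arctan √(m / M)) ^ 2 = M / (M + m) ∧ sin (arctan √(m / M)) ^ 2 = m / (M + m) := by
  have hMm : M + m ≠ 0 := by positivity
  rw [cos_sq_arctan, sin_sq_arctan, sq_sqrt (by positivity)]
  constructor <;> field_simp

variable {M m θ : ℝ}

theorem cos_add_sin_div_tan (hs : sin θ ≠ 0) (α : ℝ) :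
    cos α + sin α / tan θ = sin (α + θ) / sin θ := by
  rw [tan_eq_sin_div_cos, div_div_eq_mul_div, sin_add]
  field_simp
  ring

theorem sin_div_tan_sub_cos (hs : sin θ ≠ 0) (β : ℝ) :
    sin (β + θ) / tan θ - cos (β + θ) = sin β / sin θ := by
  rw [tan_eq_sin_div_cos, div_div_eq_mul_div, sin_add, cos_add]
  field_simp
  linear_combination sin β * sin_sq_add_cos_sq θ

theorem ballBall_velocity (hcos_sq : cos θ ^ 2 = M / (M + m)) (hsin_sq : sin θ ^ 2 = m / (M + m))
    (hs : sin θ ≠ 0) (hc : cos θ ≠ 0) (V₀ α : ℝ) :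
    ((M - m) * (V₀ * cos α) + 2 * m * (-(V₀ * sin α) / tan θ)) / (M + m)
        = V₀ * cos (α + 2 * θ) ∧
      (2 * M * (V₀ * cos α) + (m - M) * (-(V₀ * sin α) / tan θ)) / (M + m)
        = V₀ * sin (α + 2 * θ) / tan θ := by
  constructor
  · calc _ = (M / (M + m) - m / (M + m)) * (V₀ * cos α)
          + 2 * (m / (M + m)) * (-(V₀ * sin α) / tan θ) := by ring
      _ = _ := by
        rw [← hcos_sq, ← hsin_sq, tan_eq_sin_div_cos, cos_add, cos_two_mul', sin_two_mul]
        field_simp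
        ring
  · calc _ = 2 * (M / (M + m)) * (V₀ * cos α)
          + (m / (M + m) - M / (M + m)) * (-(V₀ * sin α) / tan θ) := by ring
      _ = _ := by
        rw [← hcos_sq, ← hsin_sq, tan_eq_sin_div_cos, sin_add, cos_two_mul', sin_two_mul]
        field_simp
        ring

theorem ballBall_position {X x V v x₀ V₀ α : ℝ} (hs : sin θ ≠ 0) (hc : cos θ ≠ 0)
    (hV₀ : V₀ ≠ 0) (hα : sin α ≠ 0) (hαθ : sin (α + θ) ≠ 0) (hX : X = x₀ * tan θ / sin α)
    (hx : x = 0) (hV : V = V₀ * cos α) (hv : v = -(V₀ * sin α) / tan θ) :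
    X + (X - x) * V / (v - V) = x₀ * sin θ / sin (α + θ) := by
  have hvV : v - V = -(V₀ * (sin (α + θ) / sin θ)) := by
    rw [hv, hV, ← cos_add_sin_div_tan hs]
    ring
  rw [hvV, hx, hX, hV, tan_eq_sin_div_cos]
  field_simp
  linear_combination x₀ * sin_add α θ

theorem ballWall_position {X x V v x₀ V₀ β : ℝ} (hs : sin θ ≠ 0) (hc : cos θ ≠ 0)
    (hV₀ : V₀ ≠ 0) (hβ : sin β ≠ 0) (hβθ : sin (β + θ) ≠ 0) (hx : x = x₀ * sin θ / sin β)
    (hX : x = X) (hV : V = V₀ * cos (β + θ)) (hv : v = V₀ * sin (β + θ) / tan θ) :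
    X - V / v * x = x₀ * tan θ / sin (β + θ) := by
  have hvV : v - V = V₀ * (sin β / sin θ) := by
    rw [hv, hV, ← sin_div_tan_sub_cos hs]
    ring
  have hv0 : v ≠ 0 := by
    rw [hv, tan_eq_sin_div_cos]
    exact div_ne_zero (mul_ne_zero hV₀ hβθ) (div_ne_zero hs hc)
  have hfactor : X - V / v * x = x * (v - V) / v := by
    rw [← hX]
    field_simp
  rw [hfactor, hvV, hx, hv]
  field_simp

theorem wallToBall_time {X x V v x₀ V₀ α : ℝ} (hs : sin θ ≠ 0) (hX : X = x₀ * tan θ / sin α)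
    (hx : x = 0) (hV : V = V₀ * cos α) (hv : v = -(V₀ * sin α) / tan θ) :
    (x - X) / (V - v) = -x₀ * sin θ * tan θ / (V₀ * sin α * sin (α + θ)) := by
  have hVv : V - v = V₀ * sin (α + θ) / sin θ := by
    rw [hV, hv, mul_div_assoc, ← cos_add_sin_div_tan hs]
    ring
  rw [hVv, hx, hX, zero_sub, ← neg_div, div_div_div_eq]
  ring

theorem ballToWall_time {x v x₀ V₀ β : ℝ} (hx : x = x₀ * sin θ / sin β)
    (hv : v = V₀ * sin (β + θ) / tan θ) :
    -x / v = -x₀ * sin θ * tan θ / (V₀ * sin β * sin (β + θ)) := by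
  rw [hx, hv, ← neg_div, div_div_div_eq]
  ring

theorem velocity_closed_form {V v : ℕ → ℝ}
    (hcos_sq : cos θ ^ 2 = M / (M + m)) (hsin_sq : sin θ ^ 2 = m / (M + m))
    (hs : sin θ ≠ 0) (hc : cos θ ≠ 0) (hv0 : v 0 = 0)
    (hBBvel : ∀ k : ℕ,
      V (2 * k + 1) = ((M - m) * V (2 * k) + 2 * m * v (2 * k)) / (M + m) ∧
      v (2 * k + 1) = (2 * M * V (2 * k) + (m - M) * v (2 * k)) / (M + m))
    (hBWvel : ∀ k : ℕ, 1 ≤ k →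
      V (2 * k) = V (2 * k - 1) ∧ v (2 * k) = -v (2 * k - 1)) (k : ℕ) :
    (V (2 * k) = V 0 * cos ((2 * k : ℕ) * θ) ∧
        v (2 * k) = -(V 0 * sin ((2 * k : ℕ) * θ)) / tan θ) ∧
      (V (2 * k + 1) = V 0 * cos ((2 * k + 1 + 1 : ℕ) * θ) ∧
        v (2 * k + 1) = V 0 * sin ((2 * k + 1 + 1 : ℕ) * θ) / tan θ) := by
  have hodd : ∀ i : ℕ, V (2 * i) = V 0 * cos ((2 * i : ℕ) * θ) →
      v (2 * i) = -(V 0 * sin ((2 * i : ℕ) * θ)) / tan θ →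
      V (2 * i + 1) = V 0 * cos ((2 * i + 1 + 1 : ℕ) * θ) ∧
        v (2 * i + 1) = V 0 * sin ((2 * i + 1 + 1 : ℕ) * θ) / tan θ := by
    intro i hV hv
    have hangle : ((2 * i + 1 + 1 : ℕ) : ℝ) * θ = (2 * i : ℕ) * θ + 2 * θ := by push_cast; ring
    rw [(hBBvel i).1, (hBBvel i).2, hV, hv, hangle]
    exact ballBall_velocity hcos_sq hsin_sq hs hc _ _
  have heven : ∀ i : ℕ, V (2 * i) = V 0 * cos ((2 * i : ℕ) * θ) ∧
      v (2 * i) = -(V 0 * sin ((2 * i : ℕ) * θ)) / tan θ := by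
    intro i
    induction i with
    | zero => simp [hv0]
    | succ i ih =>
      obtain ⟨hV, hv⟩ := hBWvel (i + 1) i.succ_pos
      rw [Nat.mul_succ, show 2 * i + 2 - 1 = 2 * i + 1 by omega] at hV hv
      rw [Nat.mul_succ, hV, hv, (hodd i ih.1 ih.2).1, (hodd i ih.1 ih.2).2, neg_div]
      exact ⟨rfl, rfl⟩
  exact ⟨heven k, hodd k (heven k).1 (heven k).2⟩

theorem position_closed_form {V v X x : ℕ → ℝ} {n : ℕ} (hs : sin θ ≠ 0) (hc : cos θ ≠ 0)
    (hV0 : V 0 ≠ 0) (hv0 : v 0 = 0) (hsin : ∀ j : ℕ, 1 ≤ j → j ≤ n → sin (j * θ) ≠ 0)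
    (hvel : ∀ k : ℕ,
      (V (2 * k) = V 0 * cos ((2 * k : ℕ) * θ) ∧
        v (2 * k) = -(V 0 * sin ((2 * k : ℕ) * θ)) / tan θ) ∧
      (V (2 * k + 1) = V 0 * cos ((2 * k + 1 + 1 : ℕ) * θ) ∧
        v (2 * k + 1) = V 0 * sin ((2 * k + 1 + 1 : ℕ) * θ) / tan θ))
    (hBBpos : ∀ k : ℕ, 2 * k + 1 ≤ n →
      X (2 * k + 1)
        = X (2 * k) + (X (2 * k) - x (2 * k)) * V (2 * k) / (v (2 * k) - V (2 * k)) ∧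
      x (2 * k + 1) = X (2 * k + 1))
    (hBWpos : ∀ k : ℕ, 1 ≤ k → 2 * k ≤ n →
      X (2 * k) = X (2 * k - 1) - (V (2 * k - 1) / v (2 * k - 1)) * x (2 * k - 1) ∧
      x (2 * k) = 0) (k : ℕ) :
    (1 ≤ k → 2 * k ≤ n → X (2 * k) = x 0 * tan θ / sin ((2 * k : ℕ) * θ) ∧ x (2 * k) = 0) ∧
      (2 * k + 1 ≤ n → x (2 * k + 1) = x 0 * sin θ / sin ((2 * k + 1 : ℕ) * θ)) := by
  have hwall : ∀ i : ℕ, 2 * (i + 1) ≤ n →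
      x (2 * i + 1) = x 0 * sin θ / sin ((2 * i + 1 : ℕ) * θ) →
      X (2 * (i + 1)) = x 0 * tan θ / sin ((2 * (i + 1) : ℕ) * θ) ∧ x (2 * (i + 1)) = 0 := by
    intro i hi hx
    obtain ⟨hX, hx'⟩ := hBWpos (i + 1) i.succ_pos hi
    rw [Nat.mul_succ] at hi hX hx' ⊢
    rw [show 2 * i + 2 - 1 = 2 * i + 1 by omega] at hX
    obtain ⟨hV, hv⟩ := (hvel i).2
    rw [Nat.cast_succ, add_one_mul] at hV hv ⊢
    refine ⟨hX.trans (ballWall_position hs hc hV0 (hsin _ (by omega) (by omega)) ?_ hx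
      (hBBpos i (by omega)).2 hV hv), hx'⟩
    rw [← add_one_mul, ← Nat.cast_succ]
    exact hsin _ (by omega) hi
  have hball : ∀ i : ℕ, 1 ≤ i → 2 * i + 1 ≤ n →
      X (2 * i) = x 0 * tan θ / sin ((2 * i : ℕ) * θ) → x (2 * i) = 0 →
      x (2 * i + 1) = x 0 * sin θ / sin ((2 * i + 1 : ℕ) * θ) := by
    intro i hi hin hX hx
    obtain ⟨hV, hv⟩ := (hvel i).1
    rw [(hBBpos i hin).2, (hBBpos i hin).1, Nat.cast_succ, add_one_mul]
    have hsucc := hsin (2 * i + 1) (by omega) hin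
    rw [Nat.cast_succ, add_one_mul] at hsucc
    exact ballBall_position hs hc hV0 (hsin _ (by omega) (by omega)) hsucc hX hx hV hv
  induction k with
  | zero =>
    refine ⟨fun h => absurd h (by omega), fun h => ?_⟩
    obtain ⟨hX, hx⟩ := hBBpos 0 h
    simp only [mul_zero, zero_add, hv0, zero_sub] at hX hx
    have hX1 : X 1 = x 0 := by rw [hX]; field_simp; ring
    rw [hx, hX1, Nat.cast_one, one_mul, mul_div_assoc, div_self hs, mul_one]
  | succ k ih =>
    have heven := fun h : 2 * (k + 1) ≤ n => hwall k h (ih.2 (by omega))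
    exact ⟨fun _ h => heven h, fun h => hball (k + 1) k.succ_pos h (heven (by omega)).1
      (heven (by omega)).2⟩

end Galperin

theorem galperin_intercollision_time_closed_form_general
    (M m : ℝ) (hM : 0 < M) (hm : 0 < m)
    (θ : ℝ) (hθ : θ = Real.arctan (Real.sqrt (m / M)))
    (n : ℕ)
    (hsin : ∀ j : ℕ, 1 ≤ j → j ≤ n + 1 → Real.sin ((j : ℝ) * θ) ≠ 0)
    (V v X x τ : ℕ → ℝ)
    (hV0 : 0 < V 0) (hv0 : v 0 = 0)
    (hBBvel : ∀ k : ℕ,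
      V (2 * k + 1) = ((M - m) * V (2 * k) + 2 * m * v (2 * k)) / (M + m) ∧
      v (2 * k + 1) = (2 * M * V (2 * k) + (m - M) * v (2 * k)) / (M + m))
    (hBWvel : ∀ k : ℕ, 1 ≤ k →
      V (2 * k) = V (2 * k - 1) ∧ v (2 * k) = -v (2 * k - 1))
    (hBBpos : ∀ k : ℕ, 2 * k + 1 ≤ n →
      X (2 * k + 1)
        = X (2 * k) + (X (2 * k) - x (2 * k)) * V (2 * k) / (v (2 * k) - V (2 * k)) ∧
      x (2 * k + 1) = X (2 * k + 1))
    (hBWpos : ∀ k : ℕ, 1 ≤ k → 2 * k ≤ n →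
      X (2 * k) = X (2 * k - 1) - (V (2 * k - 1) / v (2 * k - 1)) * x (2 * k - 1) ∧
      x (2 * k) = 0)
    (hτeven : ∀ k : ℕ, 2 * k ≤ n →
      τ (2 * k) = (x (2 * k) - X (2 * k)) / (V (2 * k) - v (2 * k)))
    (hτodd : ∀ k : ℕ, 2 * k + 1 ≤ n →
      τ (2 * k + 1) = -x (2 * k + 1) / v (2 * k + 1)) :
    ∀ j : ℕ, 1 ≤ j → j ≤ n →
      τ j = -x 0 * Real.sin θ * Real.tan θ /
        (V 0 * Real.sin ((j : ℝ) * θ) * Real.sin (((j : ℝ) + 1) * θ)) := by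
  have hc : Real.cos θ ≠ 0 := hθ ▸ (Real.cos_arctan_pos _).ne'
  have hs : Real.sin θ ≠ 0 := by simpa using hsin 1 le_rfl (by omega)
  obtain ⟨hcos_sq, hsin_sq⟩ := hθ ▸ Galperin.sq_cos_sin_arctan_sqrt_div hM hm.le
  have hvel := Galperin.velocity_closed_form hcos_sq hsin_sq hs hc hv0 hBBvel hBWvel
  have hpos := Galperin.position_closed_form hs hc hV0.ne' hv0
    (fun j h1 h2 => hsin j h1 (by omega)) hvel hBBpos hBWpos
  intro j hj1 hjn
  rw [add_one_mul]
  obtain ⟨k, rfl | rfl⟩ := Nat.even_or_odd' j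
  · obtain ⟨hX, hx⟩ := (hpos k).1 (by omega) hjn
    rw [hτeven k hjn]
    exact Galperin.wallToBall_time hs hX hx (hvel k).1.1 (hvel k).1.2
  · obtain ⟨-, hv⟩ := (hvel k).2
    rw [Nat.cast_succ, add_one_mul] at hv
    rw [hτodd k hjn]
    exact Galperin.ballToWall_time ((hpos k).2 hjn) hv

/-- Closed form for the inter-collision times of the Galperin billiard:
`τ_j = −x_0 sin θ tan θ / (V_0 sin(jθ) sin((j+1)θ))` for all `1 ≤ j ≤ n`,
where `θ = arctan √(m/M)` and `sin(jθ) ≠ 0` for all `1 ≤ j ≤ n+1`. -/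
theorem galperin_intercollision_time_closed_form
    (M m : ℝ) (hM : 0 < M) (hm : 0 < m)
    (θ : ℝ) (hθ : θ = Real.arctan (Real.sqrt (m / M)))
    (n : ℕ) (hn : 1 ≤ n)
    (hsin : ∀ j : ℕ, 1 ≤ j → j ≤ n + 1 → Real.sin ((j : ℝ) * θ) ≠ 0)
    (V v X x τ : ℕ → ℝ)
    (hV0 : 0 < V 0) (hv0 : v 0 = 0) (hX0x0 : X 0 < x 0) (hx0 : x 0 < 0)
    (hBBvel : ∀ k : ℕ,
      V (2 * k + 1) = ((M - m) * V (2 * k) + 2 * m * v (2 * k)) / (M + m) ∧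
      v (2 * k + 1) = (2 * M * V (2 * k) + (m - M) * v (2 * k)) / (M + m))
    (hBWvel : ∀ k : ℕ, 1 ≤ k →
      V (2 * k) = V (2 * k - 1) ∧ v (2 * k) = -v (2 * k - 1))
    (hBBpos : ∀ k : ℕ, 2 * k + 1 ≤ n →
      X (2 * k + 1)
        = X (2 * k) + (X (2 * k) - x (2 * k)) * V (2 * k) / (v (2 * k) - V (2 * k)) ∧
      x (2 * k + 1) = X (2 * k + 1))
    (hBWpos : ∀ k : ℕ, 1 ≤ k → 2 * k ≤ n →
      X (2 * k) = X (2 * k - 1) - (V (2 * k - 1) / v (2 * k - 1)) * x (2 * k - 1) ∧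
      x (2 * k) = 0)
    (hτeven : ∀ k : ℕ, 2 * k ≤ n →
      τ (2 * k) = (x (2 * k) - X (2 * k)) / (V (2 * k) - v (2 * k)))
    (hτodd : ∀ k : ℕ, 2 * k + 1 ≤ n →
      τ (2 * k + 1) = -x (2 * k + 1) / v (2 * k + 1)) :
    ∀ j : ℕ, 1 ≤ j → j ≤ n →
      τ j = -x 0 * Real.sin θ * Real.tan θ /
        (V 0 * Real.sin ((j : ℝ) * θ) * Real.sin (((j : ℝ) + 1) * θ)) :=
  galperin_intercollision_time_closed_form_general M m hM hm θ hθ n hsin V v X x τ hV0 hv0 hBBvel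
    hBWvel hBBpos hBWpos hτeven hτodd
end

section
/- Fix an integer k ≥ 0 and assume sin(jθ) ≠ 0 for all integers 1 ≤ j ≤ 2k+1. Then the Weidman ball-ball invariant holds: X_{2k+1}·(V_{2k+1} − v_{2k+1}) = −x_0·V_0 (the same positive constant |x_0|·V_0 for every k), i.e. the product of the common collision position and the outgoing relative velocity at every ball-ball collision of the Galperin billiard is conserved. -/
/-- Weidman's ball-ball invariant of the Galperin billiard: at every ball-ball
collision, `X_{2k+1} · (V_{2k+1} − v_{2k+1}) = −x_0 · V_0`, the same positive
constant `|x_0| · V_0` for every `k`. -/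
theorem galperin_ball_ball_action_invariant
    (M m : ℝ) (hM : 0 < M) (hm : 0 < m)
    (θ : ℝ) (hθ : θ = Real.arctan (Real.sqrt (m / M)))
    (k : ℕ)
    (hsin : ∀ j : ℕ, 1 ≤ j → j ≤ 2 * k + 1 → Real.sin ((j : ℝ) * θ) ≠ 0)
    (V v X x : ℕ → ℝ)
    (hV0 : 0 < V 0) (hv0 : v 0 = 0) (hX0x0 : X 0 < x 0) (hx0 : x 0 < 0)
    (hBBvel : ∀ l : ℕ,
      V (2 * l + 1) = ((M - m) * V (2 * l) + 2 * m * v (2 * l)) / (M + m) ∧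
      v (2 * l + 1) = (2 * M * V (2 * l) + (m - M) * v (2 * l)) / (M + m))
    (hBWvel : ∀ l : ℕ, 1 ≤ l →
      V (2 * l) = V (2 * l - 1) ∧ v (2 * l) = -v (2 * l - 1))
    (hBBpos : ∀ l : ℕ, 2 * l + 1 ≤ 2 * k + 1 →
      X (2 * l + 1)
        = X (2 * l) + (X (2 * l) - x (2 * l)) * V (2 * l) / (v (2 * l) - V (2 * l)) ∧
      x (2 * l + 1) = X (2 * l + 1))
    (hBWpos : ∀ l : ℕ, 1 ≤ l → 2 * l ≤ 2 * k + 1 →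
      X (2 * l) = X (2 * l - 1) - (V (2 * l - 1) / v (2 * l - 1)) * x (2 * l - 1) ∧
      x (2 * l) = 0) :
    X (2 * k + 1) * (V (2 * k + 1) - v (2 * k + 1)) = -x 0 * V 0 := by
  have hMm : M + m ≠ 0 := by positivity
  set a := Real.sqrt M with ha_def
  set b := Real.sqrt m with hb_def
  set r := Real.sqrt (M + m) with hr_def
  have ha : (0:ℝ) < a := Real.sqrt_pos.2 hM
  have hb : (0:ℝ) < b := Real.sqrt_pos.2 hm
  have hr : (0:ℝ) < r := Real.sqrt_pos.2 (by linarith)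
  have ha2 : a ^ 2 = M := Real.sq_sqrt hM.le
  have hb2 : b ^ 2 = m := Real.sq_sqrt hm.le
  have hr2 : r ^ 2 = M + m := Real.sq_sqrt (by linarith)
  -- trig values
  have hsqrt_mM : Real.sqrt (m / M) = b / a := Real.sqrt_div' m hM.le
  have hden : Real.sqrt (1 + Real.sqrt (m / M) ^ 2) = r / a := by
    rw [Real.sq_sqrt (by positivity : (0:ℝ) ≤ m / M)]
    rw [show (1 : ℝ) + m / M = (M + m) / M by field_simp]
    exact Real.sqrt_div' (M + m) hM.le
  have hcosθ : Real.cos θ = a / r := by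
    rw [hθ, Real.cos_arctan, hden, one_div_div]
  have hsinθ : Real.sin θ = b / r := by
    rw [hθ, Real.sin_arctan, hden, hsqrt_mM]
    field_simp
  have hc2 : Real.cos (2 * θ) = (M - m) / (M + m) := by
    rw [two_mul, Real.cos_add, hcosθ, hsinθ, ← hr2, ← ha2, ← hb2]
    field_simp
  have hs2 : Real.sin (2 * θ) = 2 * a * b / (M + m) := by
    rw [two_mul, Real.sin_add, hcosθ, hsinθ, ← hr2]
    field_simp
    ring
  have hsc : ∀ y : ℝ, r * Real.sin (y + θ) = a * Real.sin y + b * Real.cos y := by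
    intro y
    rw [Real.sin_add, hcosθ, hsinθ]
    field_simp
  -- velocity closed forms
  have hOdd : ∀ l : ℕ,
      (V (2 * l) = V 0 * Real.cos (2 * (l : ℝ) * θ) ∧
        b * v (2 * l) = -(V 0 * a * Real.sin (2 * (l : ℝ) * θ))) →
      (V (2 * l + 1) = V 0 * Real.cos (2 * (l : ℝ) * θ + 2 * θ) ∧
        b * v (2 * l + 1) = V 0 * a * Real.sin (2 * (l : ℝ) * θ + 2 * θ)) := by
    intro l ⟨h1, h2⟩
    obtain ⟨hVr, hvr⟩ := hBBvel l
    have hvl : v (2 * l) = -(V 0 * a * Real.sin (2 * (l : ℝ) * θ)) / b := by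
      rw [← h2]; field_simp
    constructor
    · rw [hVr, Real.cos_add, hc2, hs2, h1, hvl, ← ha2, ← hb2]
      field_simp
      ring
    · rw [hvr, Real.sin_add, hc2, hs2, h1, hvl, ← ha2, ← hb2]
      field_simp
      ring
  have hEven : ∀ l : ℕ,
      V (2 * l) = V 0 * Real.cos (2 * (l : ℝ) * θ) ∧
        b * v (2 * l) = -(V 0 * a * Real.sin (2 * (l : ℝ) * θ)) := by
    intro l
    induction l with
    | zero => simp [hv0]
    | succ n ih =>
      obtain ⟨hoV, hov⟩ := hOdd n ih
      obtain ⟨hwV, hwv⟩ := hBWvel (n + 1) (by omega)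
      rw [show 2 * (n + 1) - 1 = 2 * n + 1 by omega] at hwV hwv
      have harg : 2 * ((n : ℝ) + 1) * θ = 2 * (n : ℝ) * θ + 2 * θ := by ring
      constructor
      · rw [hwV, hoV]; push_cast; rw [harg]
      · rw [hwv, mul_neg, hov]; push_cast; rw [harg]
  have hOddAll : ∀ l : ℕ,
      V (2 * l + 1) = V 0 * Real.cos (2 * (l : ℝ) * θ + 2 * θ) ∧
        b * v (2 * l + 1) = V 0 * a * Real.sin (2 * (l : ℝ) * θ + 2 * θ) :=
    fun l => hOdd l (hEven l)
  -- base facts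
  have h10 : (2 : ℕ) * 0 + 1 = 1 := by norm_num
  have h00 : (2 : ℕ) * 0 = 0 := by norm_num
  have hx1 : X 1 = x 0 := by
    have h := (hBBpos 0 (by omega)).1
    rw [h10, h00, hv0] at h
    have h0V : (0:ℝ) - V 0 ≠ 0 := by intro hc; nlinarith
    rw [h]
    field_simp [hV0.ne']
    ring
  have hVv1 : V 1 - v 1 = -V 0 := by
    obtain ⟨h1, h2⟩ := hBBvel 0
    rw [h10, h00] at h1 h2
    rw [h1, h2, hv0]
    field_simp
    ring
  -- main induction
  have main : ∀ l : ℕ, l ≤ k →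
      X (2 * l + 1) * (V (2 * l + 1) - v (2 * l + 1)) = -x 0 * V 0 := by
    intro l
    induction l with
    | zero =>
      intro _
      rw [h10, hx1, hVv1]; ring
    | succ n ih =>
      intro hle
      have ihn := ih (by omega)
      -- nonzero divisors from the sine hypothesis
      have hs1 : Real.sin (2 * (n : ℝ) * θ + 2 * θ) ≠ 0 := by
        have h := hsin (2 * n + 2) (by omega) (by omega)
        push_cast at h
        rwa [show (2 * (n:ℝ) + 2) * θ = 2 * (n:ℝ) * θ + 2 * θ by ring] at h
      have hs2' : Real.sin (2 * (n : ℝ) * θ + 2 * θ + θ) ≠ 0 := by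
        have h := hsin (2 * n + 3) (by omega) (by omega)
        push_cast at h
        rwa [show (2 * (n:ℝ) + 3) * θ = 2 * (n:ℝ) * θ + 2 * θ + θ by ring] at h
      obtain ⟨hoV, hov⟩ := hOddAll n
      have hvA : v (2 * n + 1) ≠ 0 := by
        intro hc
        have h0 : V 0 * a * Real.sin (2 * (n : ℝ) * θ + 2 * θ) = 0 := by
          rw [← hov, hc, mul_zero]
        simp [mul_eq_zero, hV0.ne', ha.ne'] at h0
        exact hs1 h0
      have hvVA : v (2 * n + 1) + V (2 * n + 1) ≠ 0 := by
        have hsum : b * (v (2 * n + 1) + V (2 * n + 1))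
            = V 0 * (r * Real.sin (2 * (n : ℝ) * θ + 2 * θ + θ)) := by
          rw [hsc (2 * (n : ℝ) * θ + 2 * θ), mul_add, hov, hoV]; ring
        intro hc
        rw [hc, mul_zero] at hsum
        have h0 := hsum.symm
        simp [mul_eq_zero, hV0.ne', hr.ne'] at h0
        exact hs2' h0
      -- position and velocity relations
      have hxA : x (2 * n + 1) = X (2 * n + 1) := (hBBpos n (by omega)).2
      obtain ⟨hwX, hwx⟩ := hBWpos (n + 1) (by omega) (by omega)
      obtain ⟨hwV, hwv⟩ := hBWvel (n + 1) (by omega)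
      rw [show 2 * (n + 1) - 1 = 2 * n + 1 by omega] at hwX hwV hwv
      obtain ⟨hbX, _⟩ := hBBpos (n + 1) (by omega)
      obtain ⟨hbV, hbv⟩ := hBBvel (n + 1)
      -- outgoing relative velocity at the next ball-ball collision
      have hVvC : V (2 * (n + 1) + 1) - v (2 * (n + 1) + 1)
          = -(V (2 * n + 1) + v (2 * n + 1)) := by
        rw [hbV, hbv, hwV, hwv]
        field_simp
        ring
      have hnvV : -v (2 * n + 1) - V (2 * n + 1) ≠ 0 := by
        intro hc; apply hvVA; linarith
      rw [hVvC, hbX, hwX, hwx, hwV, hwv, hxA, ← ihn]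
      field_simp [hvA, hnvV, hvVA]
      ring
  exact main k le_rfl
end

section
/- Let M, m > 0 and define G(X, x, V, v) = X·v − x·V (so that the squared angular momentum in billiard coordinates is L² = m·M·G²). Then: (i) G is constant along free flight, i.e. G(X + V·t, x + v·t, V, v) = G(X, x, V, v) for every real t; (ii) if X = x (ball-ball contact) and (V', v') is the elastic ball-ball collision image of (V, v), then G(X, x, V', v') = −G(X, x, V, v); (iii) if x = 0 (ball-wall contact), then G(X, 0, V, −v) = −G(X, 0, V, v). Consequently, m·M·(X·v − x·V)² is invariant under free flight, ball-ball collisions, and ball-wall collisions. -/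
/-- The quantity `G(X, x, V, v) = X·v − x·V` (whose square, times `m·M`, is the
squared angular momentum in billiard coordinates) is constant along free
flight, and changes sign at ball-ball collisions (where `X = x`) and at
ball-wall collisions (where `x = 0`). Consequently `m·M·(X·v − x·V)²` is
invariant under free flight, ball-ball collisions, and ball-wall collisions. -/
theorem galperin_angular_momentum_square_invariant
    (M m : ℝ) (hM : 0 < M) (hm : 0 < m) :
    -- (i) G is constant along free flight
    (∀ X x V v t : ℝ,
      (X + V * t) * v - (x + v * t) * V = X * v - x * V) ∧
    -- (ii) G changes sign at a ball-ball collision (contact X = x)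
    (∀ X x V v V' v' : ℝ, X = x →
      V' = ((M - m) * V + 2 * m * v) / (M + m) →
      v' = (2 * M * V + (m - M) * v) / (M + m) →
      X * v' - x * V' = -(X * v - x * V)) ∧
    -- (iii) G changes sign at a ball-wall collision (contact x = 0)
    (∀ X V v : ℝ,
      X * (-v) - 0 * V = -(X * v - 0 * V)) ∧
    -- consequently, m·M·G² is invariant under all three operations
    (∀ X x V v t : ℝ,
      m * M * ((X + V * t) * v - (x + v * t) * V) ^ 2
        = m * M * (X * v - x * V) ^ 2) ∧
    (∀ X x V v V' v' : ℝ, X = x →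
      V' = ((M - m) * V + 2 * m * v) / (M + m) →
      v' = (2 * M * V + (m - M) * v) / (M + m) →
      m * M * (X * v' - x * V') ^ 2 = m * M * (X * v - x * V) ^ 2) ∧
    (∀ X V v : ℝ,
      m * M * (X * (-v) - 0 * V) ^ 2 = m * M * (X * v - 0 * V) ^ 2) := by
  have hMm : M + m ≠ 0 := by positivity
  refine ⟨fun X x V v t => by ring,
    fun X x V v V' v' hx hV hv => ?_,
    fun X V v => by ring,
    fun X x V v t => by ring,
    fun X x V v V' v' hx hV hv => ?_,
    fun X V v => by ring⟩
  · subst hx hV hv; field_simp; ring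
  · subst hx hV hv; field_simp; ring
end

section
/- Let q ≥ 3 be an integer and let M, m > 0 satisfy m/M = tan²(π/q). Define J(V, v) = Re( (V + i·tan(π/q)·v)^q ) (real part of the q-th power of the complex number V + i·tan(π/q)·v). Then J is conserved by both collision maps: J(V', v') = J(V, v) whenever (V', v') is the elastic ball-ball collision image of (V, v), and J(V, −v) = J(V, v) (ball-wall collision). -/
/-!
Put `z = V + i·t·v` with `t = tan(π/q)`. When `m = M t²`, the ball-ball collision acts on `z` as
`z ↦ ω · z̄` with `ω = (1 + i t)/(1 - i t) = exp(2πi/q)`, so `z'^q = ω^q · conj(z^q) = conj(z^q)`,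
which has the same real part as `z^q`. The ball-wall collision is `z ↦ z̄`.
-/

open Complex ComplexConjugate

theorem re_pow_mul_conj_of_pow_eq_one {ω : ℂ} {q : ℕ} (hω : ω ^ q = 1) (z : ℂ) :
    ((ω * conj z) ^ q).re = (z ^ q).re := by
  rw [mul_pow, hω, one_mul, ← map_pow, conj_re]

theorem one_add_I_mul_tan_div_one_sub (x : ℂ) (hx : cos x ≠ 0) :
    (1 + I * tan x) / (1 - I * tan x) = exp (2 * x * I) := by
  have hplus : 1 + I * tan x = exp (x * I) / cos x := by
    rw [exp_mul_I, tan_eq_sin_div_cos]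
    field_simp
  have hminus : 1 - I * tan x = exp (-x * I) / cos x := by
    rw [exp_mul_I, cos_neg, sin_neg, tan_eq_sin_div_cos]
    field_simp
    ring
  rw [hplus, hminus, div_div_div_cancel_right₀ hx, ← exp_sub]
  ring_nf

theorem one_add_I_mul_tan_div_one_sub_pow_eq_one {q : ℕ} {α : ℝ} (hα : q * α = Real.pi)
    (hcos : Real.cos α ≠ 0) :
    ((1 + I * Real.tan α) / (1 - I * Real.tan α)) ^ q = 1 := by
  rw [ofReal_tan, one_add_I_mul_tan_div_one_sub _ (by exact_mod_cast hcos), ← exp_nat_mul]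
  convert exp_two_pi_mul_I using 2
  rw [← hα]
  push_cast
  ring

theorem collision_eq_mul_conj {M m t : ℝ} (hM : M ≠ 0) (hm : m = M * t ^ 2) (V v : ℝ) :
    ((((M - m) * V + 2 * m * v) / (M + m) : ℝ) : ℂ)
        + I * t * (((2 * M * V + (m - M) * v) / (M + m) : ℝ) : ℂ)
      = (1 + I * t) / (1 - I * t) * conj (V + I * t * v) := by
  have ht : (1 : ℝ) + t ^ 2 ≠ 0 := by positivity
  have htC : (1 : ℂ) + t ^ 2 ≠ 0 := by exact_mod_cast ht
  have hIt : 1 - I * t ≠ 0 := fun h ↦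
    htC (by linear_combination (1 + I * t) * h + (t : ℂ) ^ 2 * I_sq)
  have hV : ((M - m) * V + 2 * m * v) / (M + m)
      = ((1 - t ^ 2) * V + 2 * t ^ 2 * v) / (1 + t ^ 2) := by
    subst hm
    field_simp
  have hv : (2 * M * V + (m - M) * v) / (M + m) = (2 * V + (t ^ 2 - 1) * v) / (1 + t ^ 2) := by
    subst hm
    field_simp
  rw [hV, hv, div_mul_eq_mul_div, eq_div_iff hIt]
  simp only [map_add, map_mul, conj_I, conj_ofReal]
  push_cast
  field_simp
  linear_combination 2 * (t : ℂ) ^ 2 * (v - V) * I_sq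

theorem cos_pi_div_natCast_ne_zero {q : ℕ} (hq : 2 < q) : Real.cos (Real.pi / q) ≠ 0 := by
  have hpos : 0 < Real.pi / q := div_pos Real.pi_pos (by positivity)
  have hlt : Real.pi / q < Real.pi / 2 :=
    div_lt_div_of_pos_left Real.pi_pos two_pos (by exact_mod_cast hq)
  exact (Real.cos_pos_of_mem_Ioo ⟨by linarith, hlt⟩).ne'

theorem galperin_superintegrable_invariant_conserved_general
    (q : ℕ) (hq : 3 ≤ q) (M m : ℝ) (hM : 0 < M)
    (hratio : m / M = Real.tan (Real.pi / q) ^ 2) :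
    (∀ V v V' v' : ℝ,
      V' = ((M - m) * V + 2 * m * v) / (M + m) →
      v' = (2 * M * V + (m - M) * v) / (M + m) →
      (((V' : ℂ) + Complex.I * (Real.tan (Real.pi / q) : ℝ) * (v' : ℂ)) ^ q).re
        = (((V : ℂ) + Complex.I * (Real.tan (Real.pi / q) : ℝ) * (v : ℂ)) ^ q).re) ∧
    (∀ V v : ℝ,
      (((V : ℂ) + Complex.I * (Real.tan (Real.pi / q) : ℝ) * ((-v : ℝ) : ℂ)) ^ q).re
        = (((V : ℂ) + Complex.I * (Real.tan (Real.pi / q) : ℝ) * (v : ℂ)) ^ q).re) := by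
  have hm : m = M * Real.tan (Real.pi / q) ^ 2 := by
    rw [← hratio, mul_div_cancel₀ _ hM.ne']
  have hq_angle : (q : ℝ) * (Real.pi / q) = Real.pi :=
    mul_div_cancel₀ _ (by positivity)
  have hω := one_add_I_mul_tan_div_one_sub_pow_eq_one hq_angle (cos_pi_div_natCast_ne_zero hq)
  constructor
  · rintro V v _ _ rfl rfl
    rw [collision_eq_mul_conj hM.ne' hm, re_pow_mul_conj_of_pow_eq_one hω]
  · intro V v
    have hwall : (V : ℂ) + I * (Real.tan (Real.pi / q) : ℝ) * ((-v : ℝ) : ℂ)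
        = conj ((V : ℂ) + I * (Real.tan (Real.pi / q) : ℝ) * (v : ℂ)) := by
      simp only [map_add, map_mul, conj_I, conj_ofReal]
      push_cast
      ring
    rw [hwall, ← map_pow, conj_re]

/-- For superintegrable mass ratios `m/M = tan²(π/q)` with integer `q ≥ 3`, the
Chevalley invariant `J(V, v) = Re((V + i·tan(π/q)·v)^q)` is conserved by both
the elastic ball-ball collision map and the ball-wall collision map. -/
theorem galperin_superintegrable_invariant_conserved
    (q : ℕ) (hq : 3 ≤ q) (M m : ℝ) (hM : 0 < M) (hm : 0 < m)
    (hratio : m / M = Real.tan (Real.pi / q) ^ 2) :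
    (∀ V v V' v' : ℝ,
      V' = ((M - m) * V + 2 * m * v) / (M + m) →
      v' = (2 * M * V + (m - M) * v) / (M + m) →
      (((V' : ℂ) + Complex.I * (Real.tan (Real.pi / q) : ℝ) * (v' : ℂ)) ^ q).re
        = (((V : ℂ) + Complex.I * (Real.tan (Real.pi / q) : ℝ) * (v : ℂ)) ^ q).re) ∧
    (∀ V v : ℝ,
      (((V : ℂ) + Complex.I * (Real.tan (Real.pi / q) : ℝ) * ((-v : ℝ) : ℂ)) ^ q).re
        = (((V : ℂ) + Complex.I * (Real.tan (Real.pi / q) : ℝ) * (v : ℂ)) ^ q).re) :=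
  galperin_superintegrable_invariant_conserved_general q hq M m hM hratio
end

section
/- Fix an integer k ≥ 1 and assume sin(jθ) ≠ 0 for all integers 1 ≤ j ≤ 2k. Then at every ball-wall collision the Galperin billiard state lies exactly on the ellipse in velocity–inverse-position coordinates: (m/M)·(x_0/X_{2k})² + (V_{2k}/V_0)² = 1, where θ = arctan(√(m/M)). -/
/-!
Elastic collisions conserve the kinetic energy `M V² + m v²` (as does the wall) and reverse
the relative velocity `v - V`. Reversal of the relative velocity makes
`X v - x V` invariant from one wall collision to the next, so `X_{2k} v_{2k} = -x₀ V₀`, and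
substituting `v_{2k} = -x₀ V₀ / X_{2k}` into the energy gives the ellipse.

The angle `θ` only enters to keep the recursion non-degenerate: in the coordinates
`(V, tan θ · v)` a ball-ball collision followed by a wall collision is the rotation by `2θ`,
so the divisors `v_{2l} - V_{2l}` and `v_{2l+1}` are multiples of `sin((2l+1)θ)` and
`sin((2l+2)θ)`.
-/

open Real

namespace GalperinBilliard

noncomputable def elasticV (M m V v : ℝ) : ℝ := ((M - m) * V + 2 * m * v) / (M + m)

noncomputable def elasticv (M m V v : ℝ) : ℝ := (2 * M * V + (m - M) * v) / (M + m)

section Collision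

variable {M m : ℝ}

theorem elasticv_sub_elasticV (h : M + m ≠ 0) (V v : ℝ) :
    elasticv M m V v - elasticV M m V v = V - v := by
  unfold elasticv elasticV
  field_simp
  ring

theorem energy_elastic (h : M + m ≠ 0) (V v : ℝ) :
    M * elasticV M m V v ^ 2 + m * elasticv M m V v ^ 2 = M * V ^ 2 + m * v ^ 2 := by
  unfold elasticv elasticV
  field_simp
  ring

variable {θ : ℝ}

theorem elasticV_eq_rotate (hM : M ≠ 0) (hc : cos θ ≠ 0) (hm : m = M * tan θ ^ 2)
    (V v : ℝ) :
    elasticV M m V v = cos (2 * θ) * V + sin (2 * θ) * (tan θ * v) := by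
  unfold elasticV
  rw [hm, tan_eq_sin_div_cos, cos_two_mul', sin_two_mul]
  field_simp
  linear_combination
    (-(2 * sin θ ^ 2 * v) - (cos θ ^ 2 - sin θ ^ 2) * V) * sin_sq_add_cos_sq θ

theorem tan_mul_elasticv_eq_rotate (hM : M ≠ 0) (hc : cos θ ≠ 0) (hm : m = M * tan θ ^ 2)
    (V v : ℝ) :
    tan θ * elasticv M m V v = sin (2 * θ) * V - cos (2 * θ) * (tan θ * v) := by
  unfold elasticv
  rw [hm, tan_eq_sin_div_cos, cos_two_mul', sin_two_mul]
  field_simp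
  linear_combination -(sin θ * (cos θ ^ 2 * (2 * V - v) + sin θ ^ 2 * v)) * sin_sq_add_cos_sq θ

end Collision

def BallBallVelocities (M m : ℝ) (V v : ℕ → ℝ) : Prop :=
  ∀ l : ℕ, V (2 * l + 1) = elasticV M m (V (2 * l)) (v (2 * l)) ∧
    v (2 * l + 1) = elasticv M m (V (2 * l)) (v (2 * l))

def WallVelocities (V v : ℕ → ℝ) : Prop :=
  ∀ l : ℕ, 1 ≤ l → V (2 * l) = V (2 * l - 1) ∧ v (2 * l) = -v (2 * l - 1)

section Orbit

variable {M m θ : ℝ} {V v X x : ℕ → ℝ}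

theorem WallVelocities.succ (hBW : WallVelocities V v) (l : ℕ) :
    V (2 * l + 2) = V (2 * l + 1) ∧ v (2 * l + 2) = -v (2 * l + 1) := by
  simpa [show 2 * (l + 1) - 1 = 2 * l + 1 by omega, Nat.mul_succ] using hBW (l + 1) l.succ_pos

theorem kinetic_energy_wall_eq (hMm : M + m ≠ 0) (hBB : BallBallVelocities M m V v)
    (hBW : WallVelocities V v) (l : ℕ) :
    M * V (2 * l) ^ 2 + m * v (2 * l) ^ 2 = M * V 0 ^ 2 + m * v 0 ^ 2 := by
  induction l with
  | zero => rfl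
  | succ l ih =>
    obtain ⟨hV, hv⟩ := hBW.succ l
    rw [Nat.mul_succ, hV, hv, neg_sq, (hBB l).1, (hBB l).2, energy_elastic hMm, ih]

theorem velocity_wall_eq_rotate (hM : M ≠ 0) (hc : cos θ ≠ 0) (hm : m = M * tan θ ^ 2)
    (hv0 : v 0 = 0) (hBB : BallBallVelocities M m V v) (hBW : WallVelocities V v) (l : ℕ) :
    V (2 * l) = V 0 * cos (2 * l * θ) ∧ tan θ * v (2 * l) = -(V 0 * sin (2 * l * θ)) := by
  induction l with
  | zero => simp [hv0]
  | succ l ih =>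
    obtain ⟨hV, hv⟩ := hBW.succ l
    have hangle : 2 * ((l + 1 : ℕ) : ℝ) * θ = 2 * l * θ + 2 * θ := by push_cast; ring
    rw [Nat.mul_succ, hV, hv, (hBB l).1, (hBB l).2, hangle, cos_add, sin_add, mul_neg,
      elasticV_eq_rotate hM hc hm, tan_mul_elasticv_eq_rotate hM hc hm, ih.1, ih.2]
    constructor <;> ring

theorem collision_divisors_ne_zero (hM : M ≠ 0) (hc : cos θ ≠ 0) (hm : m = M * tan θ ^ 2)
    (hv0 : v 0 = 0) (hBB : BallBallVelocities M m V v) (hBW : WallVelocities V v)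
    (hV0 : V 0 ≠ 0) (l : ℕ) (hodd : sin (((2 * l + 1 : ℕ) : ℝ) * θ) ≠ 0)
    (heven : sin (((2 * l + 2 : ℕ) : ℝ) * θ) ≠ 0) :
    v (2 * l) ≠ V (2 * l) ∧ v (2 * l + 1) ≠ 0 := by
  obtain ⟨hV, hv⟩ := velocity_wall_eq_rotate hM hc hm hv0 hBB hBW l
  obtain ⟨-, hv'⟩ := velocity_wall_eq_rotate hM hc hm hv0 hBB hBW (l + 1)
  have hdiff : tan θ * (v (2 * l) - V (2 * l)) * cos θ
      = -(V 0 * sin (((2 * l + 1 : ℕ) : ℝ) * θ)) := by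
    rw [mul_sub, hv, hV]
    push_cast
    rw [show (2 * l + 1 : ℝ) * θ = 2 * l * θ + θ by ring, sin_add, tan_eq_sin_div_cos]
    field_simp
    ring
  have hvodd : tan θ * v (2 * l + 1) = V 0 * sin (((2 * l + 2 : ℕ) : ℝ) * θ) := by
    rw [Nat.mul_succ, (hBW.succ l).2] at hv'
    rw [show ((2 * l + 2 : ℕ) : ℝ) * θ = 2 * ((l + 1 : ℕ) : ℝ) * θ by push_cast; ring]
    linear_combination -hv'
  constructor
  · intro h
    rw [h, sub_self, mul_zero, zero_mul, zero_eq_neg] at hdiff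
    exact mul_ne_zero hV0 hodd hdiff
  · intro h
    rw [h, mul_zero] at hvodd
    exact mul_ne_zero hV0 heven hvodd.symm

theorem position_mul_velocity_wall_eq (hMm : M + m ≠ 0) (hv0 : v 0 = 0)
    (hBB : BallBallVelocities M m V v) (hBW : WallVelocities V v) {k : ℕ}
    (hBBpos : ∀ l : ℕ, 2 * l + 1 ≤ 2 * k →
      X (2 * l + 1)
        = X (2 * l) + (X (2 * l) - x (2 * l)) * V (2 * l) / (v (2 * l) - V (2 * l)) ∧
      x (2 * l + 1) = X (2 * l + 1))
    (hBWpos : ∀ l : ℕ, 1 ≤ l → 2 * l ≤ 2 * k →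
      X (2 * l) = X (2 * l - 1) - (V (2 * l - 1) / v (2 * l - 1)) * x (2 * l - 1) ∧
      x (2 * l) = 0)
    (hdiv : ∀ l < k, v (2 * l) ≠ V (2 * l) ∧ v (2 * l + 1) ≠ 0) :
    ∀ l ≤ k, X (2 * l) * v (2 * l) - x (2 * l) * V (2 * l) = -(x 0 * V 0) := by
  intro l hl
  induction l with
  | zero => simp [hv0]
  | succ l ih =>
    obtain ⟨hsub, hodd⟩ := hdiv l hl
    obtain ⟨hX1, hx1⟩ := hBBpos l (by omega)
    obtain ⟨hX2, hx2⟩ := hBWpos (l + 1) l.succ_pos (by omega)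
    rw [show 2 * (l + 1) - 1 = 2 * l + 1 by omega, Nat.mul_succ] at hX2
    rw [Nat.mul_succ] at hx2 ⊢
    have hball : X (2 * l + 1) * (v (2 * l) - V (2 * l))
        = X (2 * l) * v (2 * l) - x (2 * l) * V (2 * l) := by
      rw [hX1]
      field_simp [sub_ne_zero.2 hsub]
      ring
    have hwall : X (2 * l + 2) * v (2 * l + 1)
        = X (2 * l + 1) * (v (2 * l + 1) - V (2 * l + 1)) := by
      rw [hX2, hx1]
      field_simp
    have hrel : v (2 * l + 1) - V (2 * l + 1) = V (2 * l) - v (2 * l) := by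
      rw [(hBB l).1, (hBB l).2, elasticv_sub_elasticV hMm]
    calc X (2 * l + 2) * v (2 * l + 2) - x (2 * l + 2) * V (2 * l + 2)
        = -(X (2 * l + 2) * v (2 * l + 1)) := by rw [hx2, (hBW.succ l).2]; ring
      _ = X (2 * l + 1) * (v (2 * l) - V (2 * l)) := by rw [hwall, hrel]; ring
      _ = -(x 0 * V 0) := by rw [hball, ih (by omega)]

end Orbit

end GalperinBilliard

open GalperinBilliard in
theorem galperin_ball_wall_ellipse_general
    (M m : ℝ) (hM : 0 < M) (hm : 0 < m)
    (θ : ℝ) (hθ : θ = Real.arctan (Real.sqrt (m / M)))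
    (k : ℕ) (hk : 1 ≤ k)
    (hsin : ∀ j : ℕ, 1 ≤ j → j ≤ 2 * k → Real.sin ((j : ℝ) * θ) ≠ 0)
    (V v X x : ℕ → ℝ)
    (hV0 : 0 < V 0) (hv0 : v 0 = 0) (hx0 : x 0 < 0)
    (hBBvel : ∀ l : ℕ,
      V (2 * l + 1) = ((M - m) * V (2 * l) + 2 * m * v (2 * l)) / (M + m) ∧
      v (2 * l + 1) = (2 * M * V (2 * l) + (m - M) * v (2 * l)) / (M + m))
    (hBWvel : ∀ l : ℕ, 1 ≤ l →
      V (2 * l) = V (2 * l - 1) ∧ v (2 * l) = -v (2 * l - 1))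
    (hBBpos : ∀ l : ℕ, 2 * l + 1 ≤ 2 * k →
      X (2 * l + 1)
        = X (2 * l) + (X (2 * l) - x (2 * l)) * V (2 * l) / (v (2 * l) - V (2 * l)) ∧
      x (2 * l + 1) = X (2 * l + 1))
    (hBWpos : ∀ l : ℕ, 1 ≤ l → 2 * l ≤ 2 * k →
      X (2 * l) = X (2 * l - 1) - (V (2 * l - 1) / v (2 * l - 1)) * x (2 * l - 1) ∧
      x (2 * l) = 0) :
    (m / M) * (x 0 / X (2 * k)) ^ 2 + (V (2 * k) / V 0) ^ 2 = 1 := by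
  have hMm : M + m ≠ 0 := by positivity
  have hc : cos θ ≠ 0 := hθ ▸ (cos_arctan_pos _).ne'
  have hm_tan : m = M * tan θ ^ 2 := by
    rw [hθ, tan_arctan, sq_sqrt (by positivity)]
    field_simp
  have hdiv : ∀ l < k, v (2 * l) ≠ V (2 * l) ∧ v (2 * l + 1) ≠ 0 := fun l hl =>
    collision_divisors_ne_zero hM.ne' hc hm_tan hv0 hBBvel hBWvel hV0.ne' l
      (hsin _ (by omega) (by omega)) (hsin _ (by omega) (by omega))
  have hmoment := position_mul_velocity_wall_eq hMm hv0 hBBvel hBWvel hBBpos hBWpos hdiv k le_rfl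
  rw [(hBWpos k hk le_rfl).2, zero_mul, sub_zero] at hmoment
  have henergy := kinetic_energy_wall_eq hMm hBBvel hBWvel k
  have hX : X (2 * k) ≠ 0 := by
    intro h
    rw [h, zero_mul, zero_eq_neg] at hmoment
    exact mul_ne_zero hx0.ne hV0.ne' hmoment
  rw [hv0] at henergy
  field_simp
  linear_combination
    X (2 * k) ^ 2 * henergy + m * (x 0 * V 0 - X (2 * k) * v (2 * k)) * hmoment

/-- At every ball-wall collision the Galperin billiard state lies exactly on
the ellipse in velocity–inverse-position coordinates:
`(m/M)·(x_0/X_{2k})² + (V_{2k}/V_0)² = 1`. -/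
theorem galperin_ball_wall_ellipse
    (M m : ℝ) (hM : 0 < M) (hm : 0 < m)
    (θ : ℝ) (hθ : θ = Real.arctan (Real.sqrt (m / M)))
    (k : ℕ) (hk : 1 ≤ k)
    (hsin : ∀ j : ℕ, 1 ≤ j → j ≤ 2 * k → Real.sin ((j : ℝ) * θ) ≠ 0)
    (V v X x : ℕ → ℝ)
    (hV0 : 0 < V 0) (hv0 : v 0 = 0) (hX0x0 : X 0 < x 0) (hx0 : x 0 < 0)
    (hBBvel : ∀ l : ℕ,
      V (2 * l + 1) = ((M - m) * V (2 * l) + 2 * m * v (2 * l)) / (M + m) ∧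
      v (2 * l + 1) = (2 * M * V (2 * l) + (m - M) * v (2 * l)) / (M + m))
    (hBWvel : ∀ l : ℕ, 1 ≤ l →
      V (2 * l) = V (2 * l - 1) ∧ v (2 * l) = -v (2 * l - 1))
    (hBBpos : ∀ l : ℕ, 2 * l + 1 ≤ 2 * k →
      X (2 * l + 1)
        = X (2 * l) + (X (2 * l) - x (2 * l)) * V (2 * l) / (v (2 * l) - V (2 * l)) ∧
      x (2 * l + 1) = X (2 * l + 1))
    (hBWpos : ∀ l : ℕ, 1 ≤ l → 2 * l ≤ 2 * k →
      X (2 * l) = X (2 * l - 1) - (V (2 * l - 1) / v (2 * l - 1)) * x (2 * l - 1) ∧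
      x (2 * l) = 0) :
    (m / M) * (x 0 / X (2 * k)) ^ 2 + (V (2 * k) / V 0) ^ 2 = 1 :=
  galperin_ball_wall_ellipse_general M m hM hm θ hθ k hk hsin V v X x hV0 hv0 hx0 hBBvel hBWvel
    hBBpos hBWpos
end

section
/- Fix an integer k ≥ 1 and assume sin(jθ) ≠ 0 for all integers 1 ≤ j ≤ 2k. Then the heavy ball's distance from the wall at every ball-wall collision of the Galperin billiard satisfies the lower bound |X_{2k}| ≥ √(m/M)·|x_0|, where θ = arctan(√(m/M)); i.e., the heavy ball never approaches the wall closer than √(m/M) times the light ball's initial distance. -/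
/-! In the coordinates `(√M X, √m x)` the two balls form a point billiard in a wedge of angle `θ`,
where `tan θ = √(m/M)`: a ball-ball collision reflects the velocity in the side `X = x` and a
wall collision in the side `x = 0`. So each round rotates the scaled velocity `(V, tan θ · v)` by
`2θ`, whence `V_{2l} = cos (2lθ) V₀` and `tan θ · v_{2l} = -sin (2lθ) V₀`. Both reflections fix
the vertex, so they negate the angular momentum `X v - x V` about it, which free flight conserves.
Hence `X_{2k} v_{2k} = -x₀ V₀` at the wall, and `|tan θ · v_{2k}| ≤ V₀` gives the bound. -/

open Real

/-- Up to the factor `√(M m)`, the angular momentum of the point `(√M X, √m x)` with velocity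
`(√M V, √m v)` about the origin. -/
def angularMomentum (X x V v : ℝ) : ℝ := X * v - x * V

section Collision

variable {M m X x V v X' x' V' v' : ℝ}

theorem angularMomentum_ballBall (hMm : M + m ≠ 0) (hvV : v ≠ V)
    (hX' : X' = X + (X - x) * V / (v - V)) (hx' : x' = X')
    (hV' : V' = ((M - m) * V + 2 * m * v) / (M + m))
    (hv' : v' = (2 * M * V + (m - M) * v) / (M + m)) :
    angularMomentum X' x' V' v' = -angularMomentum X x V v := by
  unfold angularMomentum
  have hrel : v' - V' = V - v := by rw [hv', hV']; field_simp; ring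
  have hvV' : v - V ≠ 0 := sub_ne_zero.mpr hvV
  rw [hx', ← mul_sub, hrel, hX']
  field_simp
  ring

theorem angularMomentum_wall (hv : v ≠ 0) (hX' : X' = X - V / v * x) (hx' : x' = 0)
    (hV' : V' = V) (hv' : v' = -v) :
    angularMomentum X' x' V' v' = -angularMomentum X x V v := by
  unfold angularMomentum
  subst hX' hx' hV' hv'
  field_simp
  ring

theorem ballBall_velocity_rotation {θ : ℝ} (hθ : cos θ ≠ 0) (hM : M ≠ 0)
    (hm : m = M * tan θ ^ 2) :
    ((M - m) * V + 2 * m * v) / (M + m) = cos (2 * θ) * V + sin (2 * θ) * (tan θ * v) ∧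
      tan θ * ((2 * M * V + (m - M) * v) / (M + m))
        = sin (2 * θ) * V - cos (2 * θ) * (tan θ * v) := by
  have hpy := sin_sq_add_cos_sq θ
  have hMm : M + m = M / cos θ ^ 2 := by
    rw [hm, tan_eq_sin_div_cos]
    field_simp
    linear_combination hpy
  rw [hMm, cos_two_mul', sin_two_mul, hm, tan_eq_sin_div_cos]
  constructor
  · field_simp
  · field_simp
    ring

end Collision

section Velocities

variable {M m θ V₀ a V v V' v' : ℝ}

theorem ballBall_velocity_of_angle (hθ : cos θ ≠ 0) (hM : M ≠ 0) (hm : m = M * tan θ ^ 2)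
    (hV : V = cos a * V₀) (hv : tan θ * v = -(sin a * V₀))
    (hV' : V' = ((M - m) * V + 2 * m * v) / (M + m))
    (hv' : v' = (2 * M * V + (m - M) * v) / (M + m)) :
    V' = cos (a + 2 * θ) * V₀ ∧ tan θ * v' = sin (a + 2 * θ) * V₀ := by
  obtain ⟨hrotV, hrotv⟩ := ballBall_velocity_rotation (V := V) (v := v) hθ hM hm
  rw [hV', hv', hrotV, hrotv, hv, hV, cos_add, sin_add]
  constructor <;> ring

theorem tan_mul_sub_mul_cos (hθ : cos θ ≠ 0) (hV : V = cos a * V₀)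
    (hv : tan θ * v = -(sin a * V₀)) :
    tan θ * (v - V) * cos θ = -(sin (a + θ) * V₀) := by
  rw [mul_sub, hv, hV, sin_add, tan_eq_sin_div_cos]
  field_simp
  ring

end Velocities

theorem velocity_even_eq {M m θ : ℝ} {V v : ℕ → ℝ} (hθ : cos θ ≠ 0) (hM : M ≠ 0)
    (hm : m = M * tan θ ^ 2) (hv0 : v 0 = 0)
    (hBBvel : ∀ l : ℕ,
      V (2 * l + 1) = ((M - m) * V (2 * l) + 2 * m * v (2 * l)) / (M + m) ∧
      v (2 * l + 1) = (2 * M * V (2 * l) + (m - M) * v (2 * l)) / (M + m))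
    (hBWvel : ∀ l : ℕ, 1 ≤ l →
      V (2 * l) = V (2 * l - 1) ∧ v (2 * l) = -v (2 * l - 1)) (l : ℕ) :
    V (2 * l) = cos (2 * l * θ) * V 0 ∧ tan θ * v (2 * l) = -(sin (2 * l * θ) * V 0) := by
  induction l with
  | zero => simp [hv0]
  | succ l ih =>
    obtain ⟨hV, hv⟩ := ballBall_velocity_of_angle hθ hM hm ih.1 ih.2 (hBBvel l).1 (hBBvel l).2
    obtain ⟨hwV, hwv⟩ := hBWvel (l + 1) (by omega)
    rw [show 2 * (l + 1) - 1 = 2 * l + 1 by omega] at hwV hwv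
    have hangle : 2 * l * θ + 2 * θ = 2 * ((l + 1 : ℕ) : ℝ) * θ := by push_cast; ring
    rw [hangle] at hV hv
    rw [hwV, hwv, hV, mul_neg, hv]
    exact ⟨rfl, rfl⟩

theorem collision_divisors_ne_zero {M m θ : ℝ} {V v : ℕ → ℝ} {k : ℕ} (hθ : cos θ ≠ 0)
    (hM : M ≠ 0) (hm : m = M * tan θ ^ 2) (hV0 : V 0 ≠ 0)
    (hsin : ∀ j : ℕ, 1 ≤ j → j ≤ 2 * k → sin ((j : ℝ) * θ) ≠ 0)
    (hBBvel : ∀ l : ℕ,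
      V (2 * l + 1) = ((M - m) * V (2 * l) + 2 * m * v (2 * l)) / (M + m) ∧
      v (2 * l + 1) = (2 * M * V (2 * l) + (m - M) * v (2 * l)) / (M + m))
    (hvel : ∀ l : ℕ,
      V (2 * l) = cos (2 * l * θ) * V 0 ∧ tan θ * v (2 * l) = -(sin (2 * l * θ) * V 0))
    (l : ℕ) (hl : l < k) :
    v (2 * l) ≠ V (2 * l) ∧ v (2 * l + 1) ≠ 0 := by
  have hsinV (i : ℕ) (hi : i ≤ 2) (hi' : 1 ≤ i) : sin (2 * l * θ + i * θ) * V 0 ≠ 0 := by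
    refine mul_ne_zero ?_ hV0
    convert hsin (2 * l + i) (by omega) (by omega) using 2
    push_cast
    ring
  constructor
  · intro hvV
    have h := tan_mul_sub_mul_cos hθ (hvel l).1 (hvel l).2
    rw [hvV, sub_self, mul_zero, zero_mul, zero_eq_neg] at h
    exact hsinV 1 (by norm_num) le_rfl (by simpa using h)
  · intro hv
    have h := (ballBall_velocity_of_angle hθ hM hm (hvel l).1 (hvel l).2
      (hBBvel l).1 (hBBvel l).2).2
    rw [hv, mul_zero] at h
    exact hsinV 2 le_rfl (by norm_num) (by exact_mod_cast h.symm)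

theorem angularMomentum_even_eq {M m : ℝ} {V v X x : ℕ → ℝ} {k : ℕ} (hMm : M + m ≠ 0)
    (hdiv : ∀ l, l < k → v (2 * l) ≠ V (2 * l) ∧ v (2 * l + 1) ≠ 0)
    (hBBvel : ∀ l : ℕ,
      V (2 * l + 1) = ((M - m) * V (2 * l) + 2 * m * v (2 * l)) / (M + m) ∧
      v (2 * l + 1) = (2 * M * V (2 * l) + (m - M) * v (2 * l)) / (M + m))
    (hBWvel : ∀ l : ℕ, 1 ≤ l →
      V (2 * l) = V (2 * l - 1) ∧ v (2 * l) = -v (2 * l - 1))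
    (hBBpos : ∀ l : ℕ, 2 * l + 1 ≤ 2 * k →
      X (2 * l + 1)
        = X (2 * l) + (X (2 * l) - x (2 * l)) * V (2 * l) / (v (2 * l) - V (2 * l)) ∧
      x (2 * l + 1) = X (2 * l + 1))
    (hBWpos : ∀ l : ℕ, 1 ≤ l → 2 * l ≤ 2 * k →
      X (2 * l) = X (2 * l - 1) - (V (2 * l - 1) / v (2 * l - 1)) * x (2 * l - 1) ∧
      x (2 * l) = 0)
    (l : ℕ) (hl : l ≤ k) :
    angularMomentum (X (2 * l)) (x (2 * l)) (V (2 * l)) (v (2 * l))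
      = angularMomentum (X 0) (x 0) (V 0) (v 0) := by
  induction l with
  | zero => rfl
  | succ l ih =>
    have hbb := angularMomentum_ballBall hMm (hdiv l (by omega)).1 (hBBpos l (by omega)).1
      (hBBpos l (by omega)).2 (hBBvel l).1 (hBBvel l).2
    obtain ⟨hX, hx⟩ := hBWpos (l + 1) (by omega) (by omega)
    obtain ⟨hV, hv⟩ := hBWvel (l + 1) (by omega)
    rw [show 2 * (l + 1) - 1 = 2 * l + 1 by omega] at hX hV hv
    rw [angularMomentum_wall (hdiv l (by omega)).2 hX hx hV hv, hbb, neg_neg, ih (by omega)]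

theorem galperin_minimal_distance_bound_general
    (M m : ℝ) (hM : 0 < M) (hm : 0 < m)
    (θ : ℝ) (hθ : θ = Real.arctan (Real.sqrt (m / M)))
    (k : ℕ) (hk : 1 ≤ k)
    (hsin : ∀ j : ℕ, 1 ≤ j → j ≤ 2 * k → Real.sin ((j : ℝ) * θ) ≠ 0)
    (V v X x : ℕ → ℝ)
    (hV0 : 0 < V 0) (hv0 : v 0 = 0)
    (hBBvel : ∀ l : ℕ,
      V (2 * l + 1) = ((M - m) * V (2 * l) + 2 * m * v (2 * l)) / (M + m) ∧
      v (2 * l + 1) = (2 * M * V (2 * l) + (m - M) * v (2 * l)) / (M + m))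
    (hBWvel : ∀ l : ℕ, 1 ≤ l →
      V (2 * l) = V (2 * l - 1) ∧ v (2 * l) = -v (2 * l - 1))
    (hBBpos : ∀ l : ℕ, 2 * l + 1 ≤ 2 * k →
      X (2 * l + 1)
        = X (2 * l) + (X (2 * l) - x (2 * l)) * V (2 * l) / (v (2 * l) - V (2 * l)) ∧
      x (2 * l + 1) = X (2 * l + 1))
    (hBWpos : ∀ l : ℕ, 1 ≤ l → 2 * l ≤ 2 * k →
      X (2 * l) = X (2 * l - 1) - (V (2 * l - 1) / v (2 * l - 1)) * x (2 * l - 1) ∧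
      x (2 * l) = 0) :
    Real.sqrt (m / M) * |x 0| ≤ |X (2 * k)| := by
  have htan : tan θ = √(m / M) := by rw [hθ, tan_arctan]
  have hcos : cos θ ≠ 0 := by rw [hθ]; exact (cos_arctan_pos _).ne'
  have hmtan : m = M * tan θ ^ 2 := by
    rw [htan, sq_sqrt (div_pos hm hM).le]
    field_simp
  have hvel := velocity_even_eq hcos hM.ne' hmtan hv0 hBBvel hBWvel
  have hcross := angularMomentum_even_eq (by positivity)
    (collision_divisors_ne_zero hcos hM.ne' hmtan hV0.ne' hsin hBBvel hvel)
    hBBvel hBWvel hBBpos hBWpos k le_rfl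
  have hXv : X (2 * k) * v (2 * k) = -(x 0 * V 0) := by
    simpa [angularMomentum, (hBWpos k hk le_rfl).2, hv0] using hcross
  refine le_of_mul_le_mul_right ?_ hV0
  calc √(m / M) * |x 0| * V 0 = |tan θ| * |X (2 * k) * v (2 * k)| := by
        rw [hXv, abs_neg, abs_mul, abs_of_pos hV0, htan, abs_of_nonneg (sqrt_nonneg _), mul_assoc]
    _ = |X (2 * k)| * |tan θ * v (2 * k)| := by rw [abs_mul, abs_mul, mul_left_comm]
    _ = |X (2 * k)| * (|sin (2 * k * θ)| * V 0) := by
        rw [(hvel k).2, abs_neg, abs_mul, abs_of_pos hV0]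
    _ ≤ |X (2 * k)| * (1 * V 0) := by gcongr; exact abs_sin_le_one _
    _ = |X (2 * k)| * V 0 := by rw [one_mul]

/-- Minimal-distance bound for the Galperin billiard: at every ball-wall
collision the heavy ball's distance from the wall satisfies
`|X_{2k}| ≥ √(m/M)·|x_0|`. -/
theorem galperin_minimal_distance_bound
    (M m : ℝ) (hM : 0 < M) (hm : 0 < m)
    (θ : ℝ) (hθ : θ = Real.arctan (Real.sqrt (m / M)))
    (k : ℕ) (hk : 1 ≤ k)
    (hsin : ∀ j : ℕ, 1 ≤ j → j ≤ 2 * k → Real.sin ((j : ℝ) * θ) ≠ 0)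
    (V v X x : ℕ → ℝ)
    (hV0 : 0 < V 0) (hv0 : v 0 = 0) (hX0x0 : X 0 < x 0) (hx0 : x 0 < 0)
    (hBBvel : ∀ l : ℕ,
      V (2 * l + 1) = ((M - m) * V (2 * l) + 2 * m * v (2 * l)) / (M + m) ∧
      v (2 * l + 1) = (2 * M * V (2 * l) + (m - M) * v (2 * l)) / (M + m))
    (hBWvel : ∀ l : ℕ, 1 ≤ l →
      V (2 * l) = V (2 * l - 1) ∧ v (2 * l) = -v (2 * l - 1))
    (hBBpos : ∀ l : ℕ, 2 * l + 1 ≤ 2 * k →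
      X (2 * l + 1)
        = X (2 * l) + (X (2 * l) - x (2 * l)) * V (2 * l) / (v (2 * l) - V (2 * l)) ∧
      x (2 * l + 1) = X (2 * l + 1))
    (hBWpos : ∀ l : ℕ, 1 ≤ l → 2 * l ≤ 2 * k →
      X (2 * l) = X (2 * l - 1) - (V (2 * l - 1) / v (2 * l - 1)) * x (2 * l - 1) ∧
      x (2 * l) = 0) :
    Real.sqrt (m / M) * |x 0| ≤ |X (2 * k)| :=
  galperin_minimal_distance_bound_general M m hM hm θ hθ k hk hsin V v X x hV0 hv0 hBBvel hBWvel
    hBBpos hBWpos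
end

section
/- Assume π/θ is not an integer and set Π = ⌊π/θ⌋, where θ = arctan(√(m/M)). Then for every integer n with 0 ≤ n < Π one has sin((n+1)θ) > 0, and consequently the collision sequence continues past step n: if n is even then V_n > v_n (the heavy ball is catching up with the light ball, so a ball-ball collision follows), and if n is odd then v_n > 0 (the light ball is moving toward the wall, so a ball-wall collision follows). -/
private lemma gpV_aux (M m V0 C S s c : ℝ) (hs : s ≠ 0) (hMm : M + m ≠ 0)
    (hs2 : s ^ 2 * (M + m) = m) (hc2 : c ^ 2 * (M + m) = M) :
    ((M - m) * (V0 * C) + 2 * m * (-(V0) * (c / s) * S)) / (M + m)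
      = V0 * (C * (c ^ 2 - s ^ 2) - S * (2 * s * c)) := by
  have e1 : (M - m) / (M + m) = c ^ 2 - s ^ 2 := by rw [div_eq_iff hMm]; linarith
  have e2 : (2 * m) / (M + m) = 2 * s ^ 2 := by rw [div_eq_iff hMm]; linarith
  calc ((M - m) * (V0 * C) + 2 * m * (-(V0) * (c / s) * S)) / (M + m)
      = (M - m) / (M + m) * (V0 * C) - (2 * m) / (M + m) * (V0 * (c / s) * S) := by ring
    _ = _ := by rw [e1, e2]; field_simp

private lemma gpv_aux (M m V0 C S s c : ℝ) (hs : s ≠ 0) (hMm : M + m ≠ 0)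
    (hs2 : s ^ 2 * (M + m) = m) (hc2 : c ^ 2 * (M + m) = M) :
    (2 * M * (V0 * C) + (m - M) * (-(V0) * (c / s) * S)) / (M + m)
      = V0 * (c / s) * (S * (c ^ 2 - s ^ 2) + C * (2 * s * c)) := by
  have e1 : (M - m) / (M + m) = c ^ 2 - s ^ 2 := by rw [div_eq_iff hMm]; linarith
  have e3 : (2 * M) / (M + m) = 2 * c ^ 2 := by rw [div_eq_iff hMm]; linarith
  calc (2 * M * (V0 * C) + (m - M) * (-(V0) * (c / s) * S)) / (M + m)
      = (2 * M) / (M + m) * (V0 * C) + (M - m) / (M + m) * (V0 * (c / s) * S) := by ring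
    _ = _ := by rw [e1, e3]; field_simp; ring

/-- Continuation property of the Galperin billiard: if `π/θ` is not an integer
and `Π = ⌊π/θ⌋`, then for every `n < Π` one has `sin((n+1)θ) > 0`, and the
collision sequence continues past step `n`: for even `n`, `V_n > v_n` (a
ball-ball collision follows), and for odd `n`, `v_n > 0` (a ball-wall collision
follows). -/
theorem galperin_collision_continuation
    (M m : ℝ) (hM : 0 < M) (hm : 0 < m)
    (θ : ℝ) (hθ : θ = Real.arctan (Real.sqrt (m / M)))
    (hirr : ¬ ∃ z : ℤ, Real.pi / θ = (z : ℝ))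
    (Pc : ℤ) (hPc : Pc = ⌊Real.pi / θ⌋)
    (V v : ℕ → ℝ) (hV0 : 0 < V 0) (hv0 : v 0 = 0)
    (hBB : ∀ k : ℕ,
      V (2 * k + 1) = ((M - m) * V (2 * k) + 2 * m * v (2 * k)) / (M + m) ∧
      v (2 * k + 1) = (2 * M * V (2 * k) + (m - M) * v (2 * k)) / (M + m))
    (hBW : ∀ k : ℕ, 1 ≤ k →
      V (2 * k) = V (2 * k - 1) ∧ v (2 * k) = -v (2 * k - 1)) :
    ∀ n : ℕ, (n : ℤ) < Pc →
      0 < Real.sin (((n : ℝ) + 1) * θ) ∧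
      (Even n → v n < V n) ∧
      (Odd n → 0 < v n) := by
  have hMm : 0 < M + m := by linarith
  -- basic facts about θ
  have hsqrt : 0 < Real.sqrt (m / M) := Real.sqrt_pos.mpr (by positivity)
  have hθpos : 0 < θ := by
    rw [hθ, ← Real.arctan_zero]
    exact Real.arctan_strictMono hsqrt
  have hθlt : θ < Real.pi / 2 := hθ ▸ Real.arctan_lt_pi_div_two _
  set s := Real.sin θ with hs_def
  set c := Real.cos θ with hc_def
  have hc : 0 < c := Real.cos_pos_of_mem_Ioo ⟨by linarith [Real.pi_pos], hθlt⟩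
  have hs : 0 < s := Real.sin_pos_of_pos_of_lt_pi hθpos (by linarith [Real.pi_pos, hθlt])
  have hpyth : s ^ 2 + c ^ 2 = 1 := Real.sin_sq_add_cos_sq θ
  have htan : s / c = Real.sqrt (m / M) := by
    rw [hs_def, hc_def, ← Real.tan_eq_sin_div_cos, hθ, Real.tan_arctan]
  have htan2 : s ^ 2 / c ^ 2 = m / M := by
    rw [← div_pow, htan, Real.sq_sqrt (by positivity)]
  have hs2 : s ^ 2 * (M + m) = m := by
    have h1 : s ^ 2 * M = m * c ^ 2 := by
      field_simp at htan2
      linarith [htan2]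
    nlinarith [hpyth]
  have hc2 : c ^ 2 * (M + m) = M := by nlinarith [hpyth, hs2]
  have hcos2 : Real.cos (2 * θ) = c ^ 2 - s ^ 2 := by
    rw [Real.cos_two_mul]; nlinarith [hpyth]
  have hsin2 : Real.sin (2 * θ) = 2 * s * c := by
    rw [Real.sin_two_mul]
  -- closed form for the velocities
  have oddstep : ∀ k : ℕ, V (2 * k) = V 0 * Real.cos ((2 * (k : ℝ)) * θ) →
      v (2 * k) = -(V 0) * (c / s) * Real.sin ((2 * (k : ℝ)) * θ) →
      V (2 * k + 1) = V 0 * Real.cos ((2 * (k : ℝ) + 2) * θ) ∧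
      v (2 * k + 1) = V 0 * (c / s) * Real.sin ((2 * (k : ℝ) + 2) * θ) := by
    intro k hVk hvk
    obtain ⟨hV1, hv1⟩ := hBB k
    have hang : (2 * (k : ℝ) + 2) * θ = (2 * (k : ℝ)) * θ + 2 * θ := by ring
    constructor
    · rw [hV1, hVk, hvk, hang, Real.cos_add, hcos2, hsin2]
      linear_combination gpV_aux M m (V 0) (Real.cos ((2 * (k : ℝ)) * θ))
        (Real.sin ((2 * (k : ℝ)) * θ)) s c hs.ne' hMm.ne' hs2 hc2
    · rw [hv1, hVk, hvk, hang, Real.sin_add, hcos2, hsin2]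
      linear_combination gpv_aux M m (V 0) (Real.cos ((2 * (k : ℝ)) * θ))
        (Real.sin ((2 * (k : ℝ)) * θ)) s c hs.ne' hMm.ne' hs2 hc2
  have key : ∀ k : ℕ,
      (V (2 * k) = V 0 * Real.cos ((2 * (k : ℝ)) * θ) ∧
       v (2 * k) = -(V 0) * (c / s) * Real.sin ((2 * (k : ℝ)) * θ)) ∧
      (V (2 * k + 1) = V 0 * Real.cos ((2 * (k : ℝ) + 2) * θ) ∧
       v (2 * k + 1) = V 0 * (c / s) * Real.sin ((2 * (k : ℝ) + 2) * θ)) := by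
    intro k
    induction k with
    | zero =>
      have hV0' : V (2 * 0) = V 0 * Real.cos ((2 * ((0 : ℕ) : ℝ)) * θ) := by
        norm_num
      have hv0' : v (2 * 0) = -(V 0) * (c / s) * Real.sin ((2 * ((0 : ℕ) : ℝ)) * θ) := by
        norm_num [hv0]
      exact ⟨⟨hV0', hv0'⟩, oddstep 0 hV0' hv0'⟩
    | succ k ih =>
      obtain ⟨_, hVodd, hvodd⟩ := ih
      obtain ⟨hW1, hW2⟩ := hBW (k + 1) (by omega)
      have hidx : 2 * (k + 1) - 1 = 2 * k + 1 := by omega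
      have hang2 : (2 * (((k : ℕ) + 1 : ℕ) : ℝ)) * θ = (2 * (k : ℝ) + 2) * θ := by
        push_cast; ring
      have hVe : V (2 * (k + 1)) = V 0 * Real.cos ((2 * (((k + 1 : ℕ)) : ℝ)) * θ) := by
        rw [hW1, hidx, hVodd, hang2]
      have hve : v (2 * (k + 1)) = -(V 0) * (c / s) * Real.sin ((2 * (((k + 1 : ℕ)) : ℝ)) * θ) := by
        rw [hW2, hidx, hvodd, hang2]; ring
      exact ⟨⟨hVe, hve⟩, oddstep (k + 1) hVe hve⟩
  -- floor is strictly below π/θ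
  have hfloor_lt : (Pc : ℝ) < Real.pi / θ := by
    rcases lt_or_eq_of_le (Int.floor_le (Real.pi / θ)) with h | h
    · rw [hPc]; exact h
    · exact absurd ⟨⌊Real.pi / θ⌋, h.symm⟩ hirr
  intro n hn
  have hn1 : ((n : ℝ) + 1) ≤ (Pc : ℝ) := by
    have : (n : ℤ) + 1 ≤ Pc := hn
    exact_mod_cast this
  have hlt_pi : ((n : ℝ) + 1) * θ < Real.pi := by
    have h1 : ((n : ℝ) + 1) * θ ≤ (Pc : ℝ) * θ :=
      mul_le_mul_of_nonneg_right hn1 hθpos.le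
    have h2 : (Pc : ℝ) * θ < Real.pi := by
      have := (lt_div_iff₀ hθpos).mp hfloor_lt
      linarith
    linarith
  have hsin_pos : 0 < Real.sin (((n : ℝ) + 1) * θ) :=
    Real.sin_pos_of_pos_of_lt_pi (by positivity) hlt_pi
  refine ⟨hsin_pos, ?_, ?_⟩
  · rintro ⟨k, hk⟩
    have hk' : n = 2 * k := by omega
    subst hk'
    obtain ⟨⟨hVk, hvk⟩, _⟩ := key k
    have hdiff : V (2 * k) - v (2 * k)
        = V 0 / s * Real.sin ((2 * (k : ℝ)) * θ + θ) := by
      rw [hVk, hvk, Real.sin_add]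
      field_simp
      ring
    have hang : (((2 * k : ℕ) : ℝ) + 1) * θ = (2 * (k : ℝ)) * θ + θ := by push_cast; ring
    rw [hang] at hsin_pos
    have hpos : 0 < V (2 * k) - v (2 * k) := by
      rw [hdiff]; positivity
    linarith
  · rintro ⟨k, hk⟩
    subst hk
    obtain ⟨_, _, hvk⟩ := key k
    have hang : (((2 * k + 1 : ℕ) : ℝ) + 1) * θ = (2 * (k : ℝ) + 2) * θ := by
      push_cast; ring
    rw [hang] at hsin_pos
    rw [hvk]
    positivity
end

section
/- Assume π/θ is not an integer and set Π = ⌊π/θ⌋, where θ = arctan(√(m/M)). Then after the Π-th collision the outgoing conditions hold: V_Π < v_Π < 0, i.e. both balls move away from the wall with the heavy ball faster, so no further collision can occur. Together with the continuation property (a further collision follows each step n < Π), this shows that the total number of collisions in the Galperin billiard equals Π = ⌊π/arctan(√(m/M))⌋; in particular, for mass ratio M/m = b^{2N} it equals ⌊π/arctan(b^{−N})⌋. -/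
/-!
With `θ = arctan √(m/M)` one has `M = (M+m) cos²θ` and `m = (M+m) sin²θ`. In the rescaled
velocities `(V, v tan θ)` a ball–ball collision is the reflection in the line of angle `θ` and a
wall collision is the reflection in the horizontal axis, so the velocity vector keeps its length `V₀`
and its polar angle runs through `0, 2θ, -2θ, 4θ, -4θ, …`: after `n` collisions it is `-nθ` or
`(n+1)θ`. For `n = ⌊π/θ⌋` we have `nθ < π < (n+1)θ`, and both angles give `V_n < v_n < 0`.
-/

open Real

namespace Galperin

/-- `(V, v)` is the velocity pair whose rescaled vector `(V, v tan θ)` has polar coordinates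
`(r, φ)`; the relation is stated without dividing by `cos θ`. -/
def PolarForm (θ r φ V v : ℝ) : Prop :=
  V = r * cos φ ∧ v * sin θ = r * cos θ * sin φ

namespace PolarForm

variable {θ r φ V v : ℝ}

theorem collide (h : PolarForm θ r φ V v) :
    PolarForm θ r (2 * θ - φ) (cos (2 * θ) * V + 2 * sin θ ^ 2 * v)
      (2 * cos θ ^ 2 * V - cos (2 * θ) * v) := by
  obtain ⟨hV, hv⟩ := h
  constructor
  · rw [cos_sub, sin_two_mul, hV]
    linear_combination 2 * sin θ * hv
  · rw [sin_sub, sin_two_mul, hV]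
    linear_combination (-cos (2 * θ)) * hv

theorem reflect (h : PolarForm θ r φ V v) : PolarForm θ r (-φ) V (-v) := by
  obtain ⟨hV, hv⟩ := h
  exact ⟨by rw [cos_neg, hV], by rw [sin_neg]; linear_combination -hv⟩

theorem lt_and_neg (h : PolarForm θ r φ V v) (hr : 0 < r) (hsin : 0 < sin θ)
    (hcos : 0 < cos θ) (hφ : sin φ < 0) (hθφ : sin (θ - φ) < 0) : V < v ∧ v < 0 := by
  obtain ⟨hV, hv⟩ := h
  have hvθ : v * sin θ < 0 := by rw [hv]; exact mul_neg_of_pos_of_neg (by positivity) hφ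
  refine ⟨lt_of_mul_lt_mul_right ?_ hsin.le, neg_of_mul_neg_left hvθ hsin.le⟩
  have hgap : V * sin θ - v * sin θ = r * sin (θ - φ) := by rw [sin_sub, hV, hv]; ring
  nlinarith [mul_neg_of_pos_of_neg hr hθφ]

end PolarForm

/-- The velocity recursion of the billiard, with `(M - m)/(M + m) = cos 2θ`,
`m/(M + m) = sin² θ` and `M/(M + m) = cos² θ`. -/
structure IsVelocitySeq (θ : ℝ) (V v : ℕ → ℝ) : Prop where
  start : v 0 = 0
  ball_ball (k : ℕ) :
    V (2 * k + 1) = cos (2 * θ) * V (2 * k) + 2 * sin θ ^ 2 * v (2 * k) ∧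
      v (2 * k + 1) = 2 * cos θ ^ 2 * V (2 * k) - cos (2 * θ) * v (2 * k)
  ball_wall (k : ℕ) : V (2 * k + 2) = V (2 * k + 1) ∧ v (2 * k + 2) = -v (2 * k + 1)

namespace IsVelocitySeq

variable {θ : ℝ} {V v : ℕ → ℝ}

theorem polarForm (h : IsVelocitySeq θ V v) (k : ℕ) :
    PolarForm θ (V 0) (-(2 * k * θ)) (V (2 * k)) (v (2 * k)) ∧
      PolarForm θ (V 0) ((2 * k + 2) * θ) (V (2 * k + 1)) (v (2 * k + 1)) := by
  have hodd : ∀ k : ℕ, PolarForm θ (V 0) (-(2 * k * θ)) (V (2 * k)) (v (2 * k)) →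
      PolarForm θ (V 0) ((2 * k + 2) * θ) (V (2 * k + 1)) (v (2 * k + 1)) := fun k hk => by
    rw [(h.ball_ball k).1, (h.ball_ball k).2]
    convert hk.collide using 1
    ring
  induction k with
  | zero => exact ⟨by simp [PolarForm, h.start], hodd 0 (by simp [PolarForm, h.start])⟩
  | succ k ih =>
    have heven : PolarForm θ (V 0) (-(2 * ↑(k + 1) * θ)) (V (2 * (k + 1))) (v (2 * (k + 1))) := by
      rw [mul_add_one, (h.ball_wall k).1, (h.ball_wall k).2]
      convert ih.2.reflect using 2
      push_cast
      ring
    exact ⟨heven, hodd _ heven⟩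

theorem exists_polarForm (h : IsVelocitySeq θ V v) (n : ℕ) :
    ∃ φ, PolarForm θ (V 0) φ (V n) (v n) ∧ (φ = -(n * θ) ∨ φ = (n + 1) * θ) := by
  obtain ⟨k, rfl | rfl⟩ := Nat.even_or_odd' n
  · exact ⟨_, (h.polarForm k).1, Or.inl (by push_cast; ring)⟩
  · exact ⟨_, (h.polarForm k).2, Or.inr (by push_cast; ring)⟩

end IsVelocitySeq

end Galperin

theorem collision_coeffs_arctan {M m θ : ℝ} (hM : 0 < M) (hm : 0 < m)
    (hθ : θ = arctan √(m / M)) (V v : ℝ) :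
    ((M - m) * V + 2 * m * v) / (M + m) = cos (2 * θ) * V + 2 * sin θ ^ 2 * v ∧
      (2 * M * V + (m - M) * v) / (M + m) = 2 * cos θ ^ 2 * V - cos (2 * θ) * v := by
  subst hθ
  have hsq : √(m / M) ^ 2 = m / M := sq_sqrt (div_pos hm hM).le
  rw [cos_two_mul', sin_sq_arctan, cos_sq_arctan, hsq]
  constructor <;> field_simp
  ring

theorem sin_floor_mul_pos_and_sin_succ_neg {θ : ℝ} (hθ₀ : 0 < θ) (hθ : θ < π)
    (hirr : ¬ ∃ z : ℤ, π / θ = z) :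
    0 < sin (⌊π / θ⌋₊ * θ) ∧ sin ((⌊π / θ⌋₊ + 1) * θ) < 0 := by
  set n := ⌊π / θ⌋₊
  have hn₁ : 1 ≤ n := Nat.one_le_floor_iff _ |>.2 <| (one_le_div hθ₀).2 hθ.le
  have hlt : (n : ℝ) < π / θ :=
    (Nat.floor_le (by positivity)).lt_of_ne fun h => hirr ⟨n, by rw [← h]; norm_cast⟩
  have hnθ : n * θ < π := (lt_div_iff₀ hθ₀).1 hlt
  have hπ : π < (n + 1) * θ := (div_lt_iff₀ hθ₀).1 (Nat.lt_floor_add_one _)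
  have hn₀ : 0 < n * θ := mul_pos (by exact_mod_cast hn₁) hθ₀
  refine ⟨sin_pos_of_pos_of_lt_pi hn₀ hnθ, ?_⟩
  rw [← sin_sub_two_pi]
  exact sin_neg_of_neg_of_neg_pi_lt (by linarith) (by linarith)

theorem sin_neg_and_sin_sub_neg {θ φ x : ℝ} (hx : 0 < sin (x * θ)) (hx₁ : sin ((x + 1) * θ) < 0)
    (hφ : φ = -(x * θ) ∨ φ = (x + 1) * θ) : sin φ < 0 ∧ sin (θ - φ) < 0 := by
  rcases hφ with rfl | rfl
  · exact ⟨by rwa [sin_neg, neg_lt_zero], by rwa [sub_neg_eq_add, ← one_add_mul, add_comm]⟩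
  · exact ⟨hx₁, by rw [show θ - (x + 1) * θ = -(x * θ) by ring, sin_neg]; linarith⟩

theorem sqrt_div_eq_zpow_neg {m b : ℝ} (hm : 0 < m) (hb : 0 < b) (N : ℕ) :
    √(m / (b ^ (2 * N) * m)) = b ^ (-(N : ℤ)) := by
  have hsq : m / (b ^ (2 * N) * m) = ((b ^ N)⁻¹) ^ 2 := by
    field_simp
    ring
  rw [hsq, sqrt_sq (by positivity), zpow_neg, zpow_natCast]

/-- Termination of the Galperin billiard: if `π/θ` is not an integer and
`Π = ⌊π/θ⌋`, then after the `Π`-th collision the outgoing conditions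
`V_Π < v_Π < 0` hold, so no further collision can occur and the total number
of collisions equals `Π = ⌊π/arctan √(m/M)⌋`; in particular, for mass ratio
`M/m = b^{2N}` it equals `⌊π/arctan(b^{−N})⌋`. -/
theorem galperin_collision_termination
    (M m : ℝ) (hM : 0 < M) (hm : 0 < m)
    (θ : ℝ) (hθ : θ = Real.arctan (Real.sqrt (m / M)))
    (hirr : ¬ ∃ z : ℤ, Real.pi / θ = (z : ℝ))
    (Pc : ℤ) (hPc : Pc = ⌊Real.pi / θ⌋)
    (V v : ℕ → ℝ) (hV0 : 0 < V 0) (hv0 : v 0 = 0)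
    (hBB : ∀ k : ℕ,
      V (2 * k + 1) = ((M - m) * V (2 * k) + 2 * m * v (2 * k)) / (M + m) ∧
      v (2 * k + 1) = (2 * M * V (2 * k) + (m - M) * v (2 * k)) / (M + m))
    (hBW : ∀ k : ℕ, 1 ≤ k →
      V (2 * k) = V (2 * k - 1) ∧ v (2 * k) = -v (2 * k - 1)) :
    V Pc.toNat < v Pc.toNat ∧ v Pc.toNat < 0 ∧
    (∀ (b : ℝ) (N : ℕ), 1 < b → M = b ^ (2 * N) * m →
      Pc = ⌊Real.pi / Real.arctan (b ^ (-(N : ℤ)))⌋) := by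
  have hx : 0 < √(m / M) := sqrt_pos.2 (div_pos hm hM)
  have hθ₀ : 0 < θ := hθ ▸ arctan_pos.2 hx
  have hθπ : θ < π := hθ ▸ (arctan_lt_pi_div_two _).trans (half_lt_self pi_pos)
  have hseq : Galperin.IsVelocitySeq θ V v :=
    ⟨hv0, fun k => (hBB k).1 ▸ (hBB k).2 ▸ collision_coeffs_arctan hM hm hθ _ _,
      fun k => hBW (k + 1) k.succ_pos⟩
  obtain ⟨φ, hpolar, hφ⟩ := hseq.exists_polarForm Pc.toNat
  obtain ⟨hsin, hsin_succ⟩ := sin_floor_mul_pos_and_sin_succ_neg hθ₀ hθπ hirr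
  rw [← Int.floor_toNat, ← hPc] at hsin hsin_succ
  obtain ⟨hφ_neg, hθφ_neg⟩ := sin_neg_and_sin_sub_neg hsin hsin_succ hφ
  obtain ⟨hlt, hneg⟩ := hpolar.lt_and_neg hV0 (hθ ▸ sin_arctan_pos.2 hx) (hθ ▸ cos_arctan_pos _)
    hφ_neg hθφ_neg
  refine ⟨hlt, hneg, fun b N hb hMb => ?_⟩
  rw [hPc, hθ, hMb, sqrt_div_eq_zpow_neg hm (by linarith)]
end

section
/- For every real number x with 0 < x ≤ 1 one has the two-sided bound π/x < π/arctan(x) < π/x + 1; consequently the floors satisfy ⌊π/arctan(x)⌋ − ⌊π/x⌋ ∈ {0, 1}. In particular, for any base b > 1 and integer N ≥ 0 with b^{−N} ≤ 1, the collision count ⌊π/arctan(b^{−N})⌋ of the Galperin billiard differs from ⌊π·b^N⌋ (the integer encoding the first N base-b digits of π) by at most 1. -/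
open Real Set

/-!
Put `g x = arctan x - π x / (π + x)`; the upper bound `π / arctan x < π / x + 1` says `g x > 0`.
Since `g' x` has the sign of `2π - (π² - 1) x` for `x > 0`, `g` increases up to
`c = 2π / (π² - 1)` and decreases afterwards, so `g x > g 0 = 0` on `(0, 1]`
as soon as `g 1 > 0`, and `g 1 = π/4 - π/(π + 1) > 0` because `π > 3`.
The lower bound is `arctan x < x`. Then `π/x ≤ π/arctan x ≤ π/x + 1` pins down the floors,
and `π / b^(-N) = π b^N`.
-/

theorem apply_left_lt_of_strictMonoOn_of_antitoneOn {f : ℝ → ℝ} {a b c x : ℝ}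
    (hmono : StrictMonoOn f (Icc a c)) (hanti : AntitoneOn f (Icc c b)) (hac : a ≤ c)
    (hab : f a < f b) (hx : x ∈ Ioc a b) : f a < f x := by
  rcases le_or_gt x c with hxc | hcx
  · exact hmono ⟨le_rfl, hac⟩ ⟨hx.1.le, hxc⟩ hx.1
  · exact hab.trans_le (hanti ⟨hcx.le, hx.2⟩ ⟨hcx.le.trans hx.2, le_rfl⟩ hx.2)

theorem Int.floor_sub_floor_eq_zero_or_one {α : Type*} [Ring α] [LinearOrder α]
    [IsStrictOrderedRing α] [FloorRing α] {u v : α} (huv : u ≤ v) (hvu : v ≤ u + 1) :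
    ⌊v⌋ - ⌊u⌋ = 0 ∨ ⌊v⌋ - ⌊u⌋ = 1 := by
  have hle := Int.floor_le_floor huv
  have hle' : ⌊v⌋ ≤ ⌊u⌋ + 1 := (Int.floor_le_floor hvu).trans_eq (Int.floor_add_one u)
  omega

namespace Real

theorem hasDerivAt_arctan_sub_pi_mul_div {y : ℝ} (hπy : π + y ≠ 0) :
    HasDerivAt (fun t ↦ arctan t - π * t / (π + t))
      (y * (2 * π - (π ^ 2 - 1) * y) / ((1 + y ^ 2) * (π + y) ^ 2)) y := by
  have hquot := ((hasDerivAt_id' y).const_mul π).div ((hasDerivAt_id' y).const_add π) hπy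
  refine ((hasDerivAt_arctan y).sub hquot).congr_deriv ?_
  field_simp
  ring

theorem pi_mul_div_pi_add_lt_arctan {x : ℝ} (hx : 0 < x) (hx1 : x ≤ 1) :
    π * x / (π + x) < arctan x := by
  set g : ℝ → ℝ := fun t ↦ arctan t - π * t / (π + t)
  set c := 2 * π / (π ^ 2 - 1)
  have hπ : 3 < π := pi_gt_three
  have hden : 0 < π ^ 2 - 1 := by nlinarith
  have hc : 0 < c := by positivity
  have hg' (y : ℝ) (hy : 0 ≤ y) := hasDerivAt_arctan_sub_pi_mul_div (by positivity : π + y ≠ 0)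
  have hcont (s : Set ℝ) (hs : s ⊆ Ici 0) : ContinuousOn g s :=
    fun y hy ↦ (hg' y (hs hy)).continuousAt.continuousWithinAt
  have hmono : StrictMonoOn g (Icc 0 c) := by
    refine strictMonoOn_of_hasDerivWithinAt_pos (convex_Icc 0 c) (hcont _ fun y hy ↦ hy.1)
      (fun y hy ↦ (hg' y (interior_subset hy).1).hasDerivWithinAt) fun y hy ↦ ?_
    rw [interior_Icc] at hy
    obtain ⟨hy0, hyc⟩ := hy
    have hlin := (lt_div_iff₀ hden).1 hyc
    apply div_pos <;> nlinarith [sq_nonneg y, sq_nonneg (π + y)]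
  have hanti : StrictAntiOn g (Icc c 1) := by
    refine strictAntiOn_of_hasDerivWithinAt_neg (convex_Icc c 1)
      (hcont _ fun y hy ↦ hc.le.trans hy.1)
      (fun y hy ↦ (hg' y (hc.le.trans (interior_subset hy).1)).hasDerivWithinAt) fun y hy ↦ ?_
    rw [interior_Icc] at hy
    obtain ⟨hcy, -⟩ := hy
    have hy0 := hc.trans hcy
    have hlin := (div_lt_iff₀ hden).1 hcy
    apply div_neg_of_neg_of_pos <;> nlinarith [sq_nonneg y, sq_nonneg (π + y)]
  have hg0 : g 0 = 0 := by simp [g]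
  have hg1 : 0 < g 1 := by
    simp only [g, arctan_one, mul_one, sub_pos]
    rw [div_lt_div_iff₀ (by linarith) (by norm_num)]
    nlinarith
  have hgx := apply_left_lt_of_strictMonoOn_of_antitoneOn hmono hanti.antitoneOn hc.le
    (by rwa [hg0]) ⟨hx, hx1⟩
  simpa [g, hg0, sub_pos] using hgx

theorem arctan_lt_self {x : ℝ} (hx : 0 < x) : arctan x < x := by
  simpa only [tan_arctan] using lt_tan (arctan_pos.2 hx) (arctan_lt_pi_div_two x)

theorem pi_div_lt_pi_div_arctan {x : ℝ} (hx : 0 < x) : π / x < π / arctan x :=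
  div_lt_div_of_pos_left pi_pos (arctan_pos.2 hx) (arctan_lt_self hx)

theorem pi_div_arctan_lt_pi_div_add_one {x : ℝ} (hx : 0 < x) (hx1 : x ≤ 1) :
    π / arctan x < π / x + 1 :=
  calc π / arctan x < π / (π * x / (π + x)) :=
        div_lt_div_of_pos_left pi_pos (by positivity) (pi_mul_div_pi_add_lt_arctan hx hx1)
    _ = π / x + 1 := by field_simp

end Real

/-- Systematic error of the Galperin billiard method: for `0 < x ≤ 1`,
`π/x < π/arctan x < π/x + 1`, hence `⌊π/arctan x⌋ − ⌊π/x⌋ ∈ {0, 1}`; in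
particular, for any base `b > 1` and `N ≥ 0` with `b^{−N} ≤ 1`, the collision
count `⌊π/arctan(b^{−N})⌋` differs from `⌊π·b^N⌋` by at most `1`. -/
theorem galperin_systematic_error_bound :
    (∀ x : ℝ, 0 < x → x ≤ 1 →
      Real.pi / x < Real.pi / Real.arctan x ∧
      Real.pi / Real.arctan x < Real.pi / x + 1) ∧
    (∀ x : ℝ, 0 < x → x ≤ 1 →
      ⌊Real.pi / Real.arctan x⌋ - ⌊Real.pi / x⌋ = 0 ∨
      ⌊Real.pi / Real.arctan x⌋ - ⌊Real.pi / x⌋ = 1) ∧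
    (∀ (b : ℝ) (N : ℕ), 1 < b → b ^ (-(N : ℤ)) ≤ 1 →
      |⌊Real.pi / Real.arctan (b ^ (-(N : ℤ)))⌋ - ⌊Real.pi * b ^ N⌋| ≤ 1) := by
  have bounds (x : ℝ) (hx : 0 < x) (hx1 : x ≤ 1) :=
    And.intro (pi_div_lt_pi_div_arctan hx) (pi_div_arctan_lt_pi_div_add_one hx hx1)
  have floors (x : ℝ) (hx : 0 < x) (hx1 : x ≤ 1) :=
    Int.floor_sub_floor_eq_zero_or_one (bounds x hx hx1).1.le (bounds x hx hx1).2.le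
  refine ⟨bounds, floors, fun b N hb hle ↦ ?_⟩
  have hscale : π / b ^ (-(N : ℤ)) = π * b ^ N := by
    rw [zpow_neg, zpow_natCast, div_inv_eq_mul]
  rw [← hscale, abs_le]
  rcases floors _ (zpow_pos (by linarith) _) hle with h | h <;> omega
end
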